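/- arXiv:math/0509544 — 3 statements merged into one kernel-verified Lean document; each statement's English description precedes it below -/
import Mathlib

section
/- Let I ⊆ k[x_1,…,x_n] be an ideal, v ∈ ℝ^n_{>0}, and C a nonempty face of the cone C_v(I) (a cone in the Gröbner fan of I). If w ∈ C and u ∈ ℝ^n satisfies in_u(I) = in_w(I), then u ∈ C. -/
/-!
Let `≺` be the monomial order comparing `v`-weights first and breaking ties lexicographically
(a well-order because `v > 0`), and let `G` be a finite Gröbner basis of `I` for `≺` whose
non-leading exponents are standard. Whenever every `g ∈ G` keeps its leading exponent among its
terms of maximal `x`-weight, division by `G` writes each `f ∈ I` as a combination of multiples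
of the `g` with distinct leading exponents; taking parts of maximal weight shows that
`in_x(I)` is generated by the `in_x(g)` and that no nonzero element of `in_x(I)` is supported
on standard exponents. Consequently `C_v(I)` is the polyhedral cone cut out by the inequalities
`⟨x, α⟩ ≤ ⟨x, lead g⟩` (with equality for `α` in the support of `in_v(g)`), and
`in_u(I) = in_w(I)` forces `in_u(g) = in_w(g)`: every inequality that is tight at `w` is tight
at `u`. So `w` lies strictly inside a segment of `C_v(I)` with endpoint `u`, and a face
containing `w` contains `u`.
-/

open MvPolynomial

/-- A term order on the monomials of `k[x_1,…,x_n]`, identified with exponent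
vectors in `ℕ^n`: a strict total order with `1` smallest and compatible with
multiplication of monomials. -/
structure TermOrder (n : ℕ) : Type where
  lt : (Fin n →₀ ℕ) → (Fin n →₀ ℕ) → Prop
  irrefl : ∀ a, ¬ lt a a
  trans : ∀ a b c, lt a b → lt b c → lt a c
  total : ∀ a b, a ≠ b → lt a b ∨ lt b a
  zero_lt : ∀ a, a ≠ 0 → lt 0 a
  add_right : ∀ a b c, lt a b → lt (a + c) (b + c)

variable {n : ℕ} {k : Type*} [Field k]

/-- The exponent of the `τ`-largest term of `f` (and `0` if `f = 0`). -/
noncomputable def TermOrder.leadExp (τ : TermOrder n) (f : MvPolynomial (Fin n) k) :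
    Fin n →₀ ℕ :=
  letI := Classical.propDecidable (∃ α, α ∈ f.support ∧ ∀ β ∈ f.support, β ≠ α → τ.lt β α)
  if h : ∃ α, α ∈ f.support ∧ ∀ β ∈ f.support, β ≠ α → τ.lt β α then h.choose else 0

/-- The initial term `in_τ(f)` : the `τ`-largest term of `f` (with coefficient). -/
noncomputable def TermOrder.initialTerm (τ : TermOrder n) (f : MvPolynomial (Fin n) k) :
    MvPolynomial (Fin n) k :=
  monomial (τ.leadExp f) (f.coeff (τ.leadExp f))

/-- The initial ideal `in_τ(I) = ⟨in_τ(f) : f ∈ I \ {0}⟩`. -/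
noncomputable def TermOrder.initialIdeal (τ : TermOrder n) (I : Ideal (MvPolynomial (Fin n) k)) :
    Ideal (MvPolynomial (Fin n) k) :=
  Ideal.span {p | ∃ f ∈ I, f ≠ 0 ∧ p = τ.initialTerm f}

/-- The `ω`-degree `⟨ω,α⟩` of a monomial exponent `α`. -/
noncomputable def wdeg (ω : Fin n → ℝ) (α : Fin n →₀ ℕ) : ℝ := ∑ i, ω i * (α i : ℝ)

/-- The initial form `in_ω(f)`: the sum of the terms of `f` whose exponents
maximize `⟨ω,·⟩`. -/
noncomputable def initialForm (ω : Fin n → ℝ) (f : MvPolynomial (Fin n) k) :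
    MvPolynomial (Fin n) k :=
  letI : DecidablePred fun α : Fin n →₀ ℕ => ∀ β ∈ f.support, wdeg ω β ≤ wdeg ω α :=
    Classical.decPred _
  ∑ α ∈ f.support.filter (fun α => ∀ β ∈ f.support, wdeg ω β ≤ wdeg ω α),
    monomial α (f.coeff α)

/-- The initial ideal `in_ω(I) = ⟨in_ω(f) : f ∈ I⟩`. -/
noncomputable def initialFormIdeal (ω : Fin n → ℝ) (I : Ideal (MvPolynomial (Fin n) k)) :
    Ideal (MvPolynomial (Fin n) k) :=
  Ideal.span {p | ∃ f ∈ I, p = initialForm ω f}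

/-- `C_≺(I)`: the closure of `{u : in_u(I) = in_≺(I)}` in `ℝ^n`. -/
noncomputable def Cprec (τ : TermOrder n) (I : Ideal (MvPolynomial (Fin n) k)) :
    Set (Fin n → ℝ) :=
  closure {u : Fin n → ℝ | initialFormIdeal u I = τ.initialIdeal I}

/-- `C_v(I)`: the closure of the equivalence class `{u : in_u(I) = in_v(I)}`. -/
noncomputable def Cv (I : Ideal (MvPolynomial (Fin n) k)) (v : Fin n → ℝ) :
    Set (Fin n → ℝ) :=
  closure {u : Fin n → ℝ | initialFormIdeal u I = initialFormIdeal v I}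

/-- `F` is a face of `C`: either empty or the set of maximizers over `C` of a
linear functional. -/
def IsFaceOf (C F : Set (Fin n → ℝ)) : Prop :=
  F = ∅ ∨ ∃ w : Fin n → ℝ, F = {x ∈ C | ∀ y ∈ C, ∑ i, w i * y i ≤ ∑ i, w i * x i}

/-- The Gröbner fan of `I`: all nonempty faces of the cones `C_v(I)`, `v ∈ ℝ^n_{>0}`. -/
noncomputable def GroebnerFan (I : Ideal (MvPolynomial (Fin n) k)) :
    Set (Set (Fin n → ℝ)) :=
  {F | F.Nonempty ∧ ∃ v : Fin n → ℝ, (∀ i, 0 < v i) ∧ IsFaceOf (Cv I v) F}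

/-- `G` is a (finite) Gröbner basis of `I` w.r.t. `τ`. -/
def IsGroebnerBasis (τ : TermOrder n) (I : Ideal (MvPolynomial (Fin n) k))
    (G : Set (MvPolynomial (Fin n) k)) : Prop :=
  G.Finite ∧ Ideal.span G = I ∧ τ.initialIdeal I = Ideal.span (τ.initialTerm '' G)

/-- `G` is the reduced Gröbner basis of `I` w.r.t. `τ`. -/
def IsReducedGroebnerBasis (τ : TermOrder n) (I : Ideal (MvPolynomial (Fin n) k))
    (G : Set (MvPolynomial (Fin n) k)) : Prop :=
  IsGroebnerBasis τ I G ∧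
  (∀ g ∈ G, g.coeff (τ.leadExp g) = 1) ∧
  (∀ g ∈ G, ∀ α ∈ g.support, α ≠ τ.leadExp g →
    (monomial α 1 : MvPolynomial (Fin n) k) ∉ τ.initialIdeal I) ∧
  (∀ g ∈ G, Ideal.span (τ.initialTerm '' (G \ {g})) ≠ τ.initialIdeal I)

open Filter Topology

theorem wdeg_eq_weight (x : Fin n → ℝ) (α : Fin n →₀ ℕ) : wdeg x α = Finsupp.weight x α := by
  simp [wdeg, Finsupp.weight_eq_sum, mul_comm]

theorem wdeg_add (x : Fin n → ℝ) (α β : Fin n →₀ ℕ) : wdeg x (α + β) = wdeg x α + wdeg x β := by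
  simp only [wdeg_eq_weight, map_add]

theorem wdeg_smul_add_smul (a b : ℝ) (x y : Fin n → ℝ) (α : Fin n →₀ ℕ) :
    wdeg (a • x + b • y) α = a * wdeg x α + b * wdeg y α := by
  simp only [wdeg, Pi.add_apply, Pi.smul_apply, smul_eq_mul, Finset.mul_sum,
    ← Finset.sum_add_distrib]
  exact Finset.sum_congr rfl fun _ _ => by ring

theorem continuous_wdeg (α : Fin n →₀ ℕ) : Continuous fun x : Fin n → ℝ => wdeg x α := by
  unfold wdeg
  fun_prop

theorem finite_setOf_wdeg_le {v : Fin n → ℝ} (hv : ∀ i, 0 < v i) (r : ℝ) :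
    {α : Fin n →₀ ℕ | wdeg v α ≤ r}.Finite := by
  refine (Set.finite_Iic (Finsupp.equivFunOnFinite.symm fun i => ⌈r / v i⌉₊)).subset
    fun α hα i => ?_
  have hi : v i * α i ≤ r := le_trans
    (Finset.single_le_sum (f := fun j => v j * (α j : ℝ))
      (fun j _ => mul_nonneg (hv j).le (Nat.cast_nonneg _)) (Finset.mem_univ i)) hα
  simpa using Nat.cast_le.1 <| ((le_div_iff₀' (hv i)).2 hi).trans (Nat.le_ceil _)

theorem wdeg_mono {v : Fin n → ℝ} (hv : ∀ i, 0 ≤ v i) : Monotone (wdeg v) := fun α β h => by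
  rw [← add_tsub_cancel_of_le h, wdeg_add]
  exact le_add_of_nonneg_right (Finset.sum_nonneg fun i _ => mul_nonneg (hv i) (Nat.cast_nonneg _))

section InitialForm

variable {x : Fin n → ℝ} {f : MvPolynomial (Fin n) k}

theorem coeff_initialForm (x : Fin n → ℝ) (f : MvPolynomial (Fin n) k) (β : Fin n →₀ ℕ) :
    (initialForm x f).coeff β =
      if ∀ γ ∈ f.support, wdeg x γ ≤ wdeg x β then f.coeff β else 0 := by
  classical
  simp only [initialForm, coeff_sum, coeff_monomial]
  rw [Finset.sum_ite_eq']
  by_cases hβ : β ∈ f.support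
  · simp [Finset.mem_filter, hβ]
  · simp [Finset.mem_filter, hβ, notMem_support_iff.1 hβ]

theorem mem_support_initialForm {β : Fin n →₀ ℕ} :
    β ∈ (initialForm x f).support ↔ β ∈ f.support ∧ ∀ γ ∈ f.support, wdeg x γ ≤ wdeg x β := by
  rw [mem_support_iff, coeff_initialForm]
  split_ifs with h
  · exact ⟨fun h' => ⟨mem_support_iff.2 h', h⟩, fun h' => mem_support_iff.1 h'.1⟩
  · exact ⟨fun h' => absurd rfl h', fun h' => absurd h'.2 h⟩

theorem initialForm_zero (x : Fin n → ℝ) : initialForm x (0 : MvPolynomial (Fin n) k) = 0 := by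
  simp [initialForm]

theorem initialForm_ne_zero (hf : f ≠ 0) : initialForm x f ≠ 0 := by
  obtain ⟨β, hβ, hmax⟩ := f.support.exists_max_image (wdeg x) (support_nonempty.2 hf)
  exact ne_zero_iff.2 ⟨β, mem_support_iff.1 (mem_support_initialForm.2 ⟨hβ, hmax⟩)⟩

theorem initialForm_mem_initialFormIdeal (x : Fin n → ℝ) {I : Ideal (MvPolynomial (Fin n) k)}
    (hf : f ∈ I) : initialForm x f ∈ initialFormIdeal x I :=
  Ideal.subset_span ⟨f, hf, rfl⟩

theorem support_weightedHomogeneousComponent_subset (x : Fin n → ℝ) (d : ℝ) :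
    (weightedHomogeneousComponent x d f).support ⊆ f.support := by
  classical
  rw [support_weightedHomogeneousComponent]
  exact Finset.filter_subset _ _

theorem coeff_weightedHomogeneousComponent_wdeg (x : Fin n → ℝ) (d : ℝ)
    (f : MvPolynomial (Fin n) k) (β : Fin n →₀ ℕ) :
    (weightedHomogeneousComponent x d f).coeff β = if wdeg x β = d then f.coeff β else 0 := by
  classical
  rw [coeff_weightedHomogeneousComponent, wdeg_eq_weight]

theorem initialForm_eq_weightedHomogeneousComponent {d : ℝ} {β : Fin n →₀ ℕ}
    (hle : ∀ γ ∈ f.support, wdeg x γ ≤ d) (hβ : β ∈ f.support) (hβd : wdeg x β = d) :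
    initialForm x f = weightedHomogeneousComponent x d f := by
  ext γ
  rw [coeff_initialForm, coeff_weightedHomogeneousComponent_wdeg]
  by_cases hγ : γ ∈ f.support
  · refine if_congr ⟨fun h => le_antisymm (hle γ hγ) (hβd ▸ h β hβ), fun h δ hδ => ?_⟩ rfl rfl
    exact h ▸ hle δ hδ
  · simp [notMem_support_iff.1 hγ]

theorem weightedHomogeneousComponent_eq_ite {d e : ℝ} {β : Fin n →₀ ℕ}
    (hle : ∀ γ ∈ f.support, wdeg x γ ≤ e) (hβ : β ∈ f.support) (hβe : wdeg x β = e)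
    (hed : e ≤ d) :
    weightedHomogeneousComponent x d f = if e = d then initialForm x f else 0 := by
  split_ifs with h
  · exact (initialForm_eq_weightedHomogeneousComponent (h ▸ hle) hβ (hβe.trans h)).symm
  · refine weightedHomogeneousComponent_eq_zero' _ _ fun γ hγ => ?_
    rw [← wdeg_eq_weight]
    exact ((hle γ hγ).trans_lt (lt_of_le_of_ne hed h)).ne

theorem exists_mem_support_of_weightedHomogeneousComponent_ne_zero {d : ℝ}
    (h : weightedHomogeneousComponent x d f ≠ 0) : ∃ β ∈ f.support, wdeg x β = d := by
  obtain ⟨β, hβ⟩ := ne_zero_iff.1 h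
  rw [coeff_weightedHomogeneousComponent_wdeg] at hβ
  split_ifs at hβ with hβd
  exacts [⟨β, mem_support_iff.2 hβ, hβd⟩, absurd rfl hβ]

theorem weightedHomogeneousComponent_initialForm (x : Fin n → ℝ) (d : ℝ)
    (f : MvPolynomial (Fin n) k) :
    weightedHomogeneousComponent x d (initialForm x f) =
      if ∀ β ∈ f.support, wdeg x β ≤ d then weightedHomogeneousComponent x d f else 0 := by
  ext β
  rw [coeff_weightedHomogeneousComponent_wdeg, coeff_initialForm]
  by_cases hβ : β ∈ f.support
  · by_cases h₁ : wdeg x β = d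
    · simp only [h₁]
      split_ifs <;> simp [coeff_weightedHomogeneousComponent_wdeg, h₁]
    · split_ifs <;> simp [coeff_weightedHomogeneousComponent_wdeg, h₁]
  · simp [notMem_support_iff.1 hβ, apply_ite, coeff_weightedHomogeneousComponent_wdeg]

theorem exists_eq_add_of_mem_support_monomial_mul {μ β : Fin n →₀ ℕ} {c : k}
    (hβ : β ∈ (monomial μ c * f).support) : ∃ β' ∈ f.support, β = μ + β' := by
  rw [mem_support_iff, coeff_monomial_mul'] at hβ
  split_ifs at hβ with hμ
  · exact ⟨β - μ, mem_support_iff.2 (right_ne_zero_of_mul hβ), (add_tsub_cancel_of_le hμ).symm⟩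
  · exact absurd rfl hβ

theorem weightedHomogeneousComponent_monomial_mul (x : Fin n → ℝ) (d : ℝ) (μ : Fin n →₀ ℕ)
    (c : k) (f : MvPolynomial (Fin n) k) :
    weightedHomogeneousComponent x d (monomial μ c * f) =
      monomial μ c * weightedHomogeneousComponent x (d - wdeg x μ) f := by
  ext β
  simp only [coeff_weightedHomogeneousComponent_wdeg, coeff_monomial_mul']
  by_cases hμ : μ ≤ β
  · have hw : wdeg x (β - μ) = wdeg x β - wdeg x μ := by
      rw [eq_sub_iff_add_eq, ← wdeg_add, tsub_add_cancel_of_le hμ]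
    simp only [if_pos hμ, hw, sub_left_inj]
    split_ifs <;> simp
  · simp [hμ]

theorem initialForm_monomial_mul (x : Fin n → ℝ) (μ : Fin n →₀ ℕ) {c : k} (hc : c ≠ 0)
    (f : MvPolynomial (Fin n) k) :
    initialForm x (monomial μ c * f) = monomial μ c * initialForm x f := by
  rcases eq_or_ne f 0 with rfl | hf
  · simp [initialForm_zero]
  obtain ⟨β, hβ, hmax⟩ := f.support.exists_max_image (wdeg x) (support_nonempty.2 hf)
  rw [initialForm_eq_weightedHomogeneousComponent hmax hβ rfl,
    initialForm_eq_weightedHomogeneousComponent (d := wdeg x μ + wdeg x β) (β := μ + β),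
    weightedHomogeneousComponent_monomial_mul, add_sub_cancel_left]
  · intro γ hγ
    obtain ⟨γ', hγ', rfl⟩ := exists_eq_add_of_mem_support_monomial_mul hγ
    rw [wdeg_add]
    linarith [hmax γ' hγ']
  · rw [mem_support_iff, coeff_monomial_mul]
    exact mul_ne_zero hc (mem_support_iff.1 hβ)
  · exact wdeg_add x μ β

theorem initialForm_eq_of_support_eq {y : Fin n → ℝ}
    (h : (initialForm x f).support = (initialForm y f).support) :
    initialForm x f = initialForm y f := by
  ext β
  rw [coeff_initialForm, coeff_initialForm]
  by_cases hβ : β ∈ f.support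
  · have hβ' := Finset.ext_iff.1 h β
    simp only [mem_support_initialForm, hβ, true_and] at hβ'
    exact if_congr hβ' rfl rfl
  · simp [notMem_support_iff.1 hβ]

theorem exists_mem_weightedHomogeneousComponent_eq {I : Ideal (MvPolynomial (Fin n) k)}
    {p : MvPolynomial (Fin n) k} (hp : p ∈ initialFormIdeal x I) (d : ℝ) :
    ∃ f ∈ I, (∀ β ∈ f.support, wdeg x β ≤ d) ∧
      weightedHomogeneousComponent x d p = weightedHomogeneousComponent x d f := by
  classical
  let P : MvPolynomial (Fin n) k → Prop := fun p => ∀ d, ∃ f ∈ I,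
    (∀ β ∈ f.support, wdeg x β ≤ d) ∧
      weightedHomogeneousComponent x d p = weightedHomogeneousComponent x d f
  have hadd : ∀ p q, P p → P q → P (p + q) := fun p q hp hq d => by
    obtain ⟨f, hf, hfd, hpf⟩ := hp d
    obtain ⟨g, hg, hgd, hqg⟩ := hq d
    refine ⟨f + g, I.add_mem hf hg, fun β hβ => ?_, by rw [map_add, map_add, hpf, hqg]⟩
    rcases Finset.mem_union.1 (support_add hβ) with h | h
    exacts [hfd β h, hgd β h]
  have hmul : ∀ μ c q, P q → P (monomial μ c * q) := fun μ c q hq d => by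
    obtain ⟨f, hf, hfd, hqf⟩ := hq (d - wdeg x μ)
    refine ⟨monomial μ c * f, I.mul_mem_left _ hf, fun β hβ => ?_, ?_⟩
    · obtain ⟨β', hβ', rfl⟩ := exists_eq_add_of_mem_support_monomial_mul hβ
      rw [wdeg_add]
      linarith [hfd β' hβ']
    · rw [weightedHomogeneousComponent_monomial_mul, weightedHomogeneousComponent_monomial_mul, hqf]
  refine Submodule.span_induction (p := fun p _ => P p) ?_ (fun d => ⟨0, I.zero_mem, by simp, rfl⟩)
    (fun p q _ _ => hadd p q) (fun a q _ hq => ?_) hp d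
  · rintro _ ⟨f, hf, rfl⟩ d
    by_cases h : ∀ β ∈ f.support, wdeg x β ≤ d
    · exact ⟨f, hf, h, by rw [weightedHomogeneousComponent_initialForm, if_pos h]⟩
    · exact ⟨0, I.zero_mem, by simp, by
        rw [weightedHomogeneousComponent_initialForm, if_neg h, map_zero]⟩
  · induction a using MvPolynomial.induction_on' with
    | monomial μ c => exact hmul μ c q hq
    | add a b ha hb => rw [add_smul]; exact hadd _ _ ha hb

end InitialForm

theorem eventually_mul_le_one_add_mul {a b : ℝ} (ha : 0 ≤ a) (hab : a = 0 → b = 0) :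
    ∀ᶠ ε in 𝓝[>] (0 : ℝ), ε * b ≤ (1 + ε) * a := by
  rcases ha.eq_or_lt with rfl | ha
  · simp [hab rfl]
  · have h : Continuous fun ε : ℝ => (1 + ε) * a - ε * b := by fun_prop
    have htend : Tendsto (fun ε : ℝ => (1 + ε) * a - ε * b) (𝓝[>] 0) (𝓝 a) := by
      simpa using (h.tendsto 0).mono_left nhdsWithin_le_nhds
    filter_upwards [htend.eventually (eventually_gt_nhds ha)] with ε hε
    linarith

theorem IsFaceOf.subset {K C : Set (Fin n → ℝ)} (h : IsFaceOf K C) : C ⊆ K := by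
  rcases h with rfl | ⟨L, rfl⟩
  exacts [Set.empty_subset _, fun x hx => hx.1]

theorem IsFaceOf.mem_of_smul_sub_smul_mem {K C : Set (Fin n → ℝ)} (hC : IsFaceOf K C)
    {w u : Fin n → ℝ} (hw : w ∈ C) (hu : u ∈ K) {ε : ℝ} (hε : 0 < ε)
    (hp : (1 + ε) • w - ε • u ∈ K) : u ∈ C := by
  rcases hC with rfl | ⟨L, rfl⟩
  · exact hw.elim
  have hL : ∑ i, L i * ((1 + ε) • w - ε • u) i =
      (1 + ε) * ∑ i, L i * w i - ε * ∑ i, L i * u i := by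
    simp only [Pi.sub_apply, Pi.smul_apply, smul_eq_mul, Finset.mul_sum, ← Finset.sum_sub_distrib]
    exact Finset.sum_congr rfl fun _ _ => by ring
  have hwp := hw.2 _ hp
  rw [hL] at hwp
  exact ⟨hu, fun y hy => (hw.2 y hy).trans (by nlinarith)⟩

namespace MonomialOrder

open scoped MonomialOrder

section General

variable {σ : Type*} (m : MonomialOrder σ)

theorem degree_eq_of_forall_le {f : MvPolynomial σ k} {d : σ →₀ ℕ} (hd : d ∈ f.support)
    (h : ∀ c ∈ f.support, c ≼[m] d) : m.degree f = d :=
  m.toSyn.injective (le_antisymm (m.degree_le_iff.2 h) (m.le_degree hd))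

theorem lt_degree_of_mem_support_sub_leadingTerm {f : MvPolynomial σ k} {d : σ →₀ ℕ}
    (hd : d ∈ (f - m.leadingTerm f).support) : d ≺[m] m.degree f := by
  classical
  rw [mem_support_iff, coeff_sub, leadingTerm, coeff_monomial] at hd
  have hne : m.degree f ≠ d := fun h => hd (by simp [h, leadingCoeff])
  rw [if_neg hne, sub_zero] at hd
  exact lt_of_le_of_ne (m.le_degree (mem_support_iff.2 hd)) (m.toSyn.injective.ne hne.symm)

theorem _root_.MvPolynomial.mem_of_forall_monomial_mem (M : Submodule k (MvPolynomial σ k))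
    {p : MvPolynomial σ k} (h : ∀ d ∈ p.support, monomial d (1 : k) ∈ M) : p ∈ M := by
  rw [p.as_sum]
  exact Submodule.sum_mem _ fun d hd => by
    simpa [smul_monomial] using M.smul_mem (p.coeff d) (h d hd)

theorem mem_span_image_sup_restrictSupport {s : Set (σ →₀ ℕ)} {b : (σ →₀ ℕ) → MvPolynomial σ k}
    (hb : ∀ γ ∈ s, b γ ≠ 0 ∧ m.degree (b γ) = γ) (p : MvPolynomial σ k) :
    p ∈ Submodule.span k (b '' s) ⊔ restrictSupport k sᶜ := by
  set M := Submodule.span k (b '' s) ⊔ restrictSupport k sᶜ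
  suffices h : ∀ a : m.syn, monomial (m.toSyn.symm a) (1 : k) ∈ M from
    mem_of_forall_monomial_mem M fun d _ => by simpa using h (m.toSyn d)
  -- `X^γ` is `b γ` up to a scalar and terms of smaller exponent, covered by induction.
  intro a
  induction a using WellFoundedLT.induction with
  | _ a ih =>
  set γ := m.toSyn.symm a
  by_cases hγ : γ ∈ s
  · obtain ⟨hb0, hbγ⟩ := hb γ hγ
    have hlc : m.leadingCoeff (b γ) ≠ 0 := m.leadingCoeff_ne_zero_iff.2 hb0
    have hγ_eq : monomial γ (1 : k) =
        (m.leadingCoeff (b γ))⁻¹ • (b γ - (b γ - m.leadingTerm (b γ))) := by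
      rw [sub_sub_cancel, leadingTerm, hbγ, smul_monomial, smul_eq_mul, inv_mul_cancel₀ hlc]
    rw [hγ_eq]
    refine M.smul_mem _ (M.sub_mem (Submodule.mem_sup_left (Submodule.subset_span ⟨γ, hγ, rfl⟩))
      (mem_of_forall_monomial_mem M fun d hd => ?_))
    have hd := m.lt_degree_of_mem_support_sub_leadingTerm hd
    rw [hbγ] at hd
    simpa using ih (m.toSyn d) (by simpa [γ] using hd)
  · exact Submodule.mem_sup_right ((mem_restrictSupport_iff k).2 fun d hd =>
      (Finset.mem_singleton.1 (support_monomial_subset hd)).symm ▸ hγ)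

theorem sum_smul_ne_zero_and_degree_mem {S : Finset (σ →₀ ℕ)} (hS : S.Nonempty)
    {c : (σ →₀ ℕ) → k} {q : (σ →₀ ℕ) → MvPolynomial σ k} (hc : ∀ γ ∈ S, c γ ≠ 0)
    (hq : ∀ γ ∈ S, q γ ≠ 0 ∧ m.degree (q γ) = γ) :
    ∑ γ ∈ S, c γ • q γ ≠ 0 ∧ m.degree (∑ γ ∈ S, c γ • q γ) ∈ S := by
  classical
  obtain ⟨γ₀, hγ₀, hmax⟩ := S.exists_max_image m.toSyn hS
  have hcoeff : (∑ γ ∈ S, c γ • q γ).coeff γ₀ = c γ₀ * m.leadingCoeff (q γ₀) := by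
    rw [coeff_sum, Finset.sum_eq_single_of_mem γ₀ hγ₀ fun γ hγ hne => ?_]
    · simp [leadingCoeff, (hq γ₀ hγ₀).2]
    · rw [coeff_smul, m.coeff_eq_zero_of_lt, smul_zero]
      rw [(hq γ hγ).2]
      exact lt_of_le_of_ne (hmax γ hγ) (m.toSyn.injective.ne hne)
  have hne : (∑ γ ∈ S, c γ • q γ).coeff γ₀ ≠ 0 := by
    rw [hcoeff]
    exact mul_ne_zero (hc γ₀ hγ₀) (m.leadingCoeff_ne_zero_iff.2 (hq γ₀ hγ₀).1)
  refine ⟨fun h => hne (by rw [h, coeff_zero]), ?_⟩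
  rwa [m.degree_eq_of_forall_le (mem_support_iff.2 hne) fun β hβ => ?_]
  obtain ⟨γ, hγ, hβγ⟩ := Finset.mem_biUnion.1 (support_sum hβ)
  have hβ' := m.le_degree (support_smul hβγ)
  rw [(hq γ hγ).2] at hβ'
  exact hβ'.trans (hmax γ hγ)

def IsStandard (I : Ideal (MvPolynomial σ k)) (β : σ →₀ ℕ) : Prop :=
  ∀ f ∈ I, f ≠ 0 → ¬ m.degree f ≤ β

variable {m} {I : Ideal (MvPolynomial σ k)}

theorem not_isStandard_degree {f : MvPolynomial σ k} (hf : f ∈ I) (hf0 : f ≠ 0) :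
    ¬ m.IsStandard I (m.degree f) :=
  fun h => h f hf hf0 le_rfl

theorem eq_zero_of_mem_of_isStandard {f : MvPolynomial σ k} (hf : f ∈ I)
    (hstd : ∀ β ∈ f.support, m.IsStandard I β) : f = 0 := by
  by_contra hf0
  exact not_isStandard_degree hf hf0 (hstd _ (m.degree_mem_support hf0))

theorem degree_monomial_sub_degree_mul {g : MvPolynomial σ k} (hg : g ≠ 0) {γ : σ →₀ ℕ}
    (hγ : m.degree g ≤ γ) : m.degree (monomial (γ - m.degree g) (1 : k) * g) = γ := by
  classical
  rw [m.degree_mul (by simp) hg, degree_monomial, if_neg one_ne_zero, tsub_add_cancel_of_le hγ]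

/-- Division with remainder by `B`. Indexing the summands by their leading exponents `γ` makes
these pairwise distinct. -/
theorem exists_eq_sum_smul_monomial_mul_add {B : Set (MvPolynomial σ k)} (hB0 : ∀ g ∈ B, g ≠ 0)
    (hB : ∀ γ, ¬ m.IsStandard I γ → ∃ g ∈ B, m.degree g ≤ γ) (p : MvPolynomial σ k) :
    ∃ (S : Finset (σ →₀ ℕ)) (c : (σ →₀ ℕ) → k) (g : (σ →₀ ℕ) → MvPolynomial σ k)
      (r : MvPolynomial σ k),
      (∀ γ ∈ S, c γ ≠ 0 ∧ ¬ m.IsStandard I γ ∧ g γ ∈ B ∧ m.degree (g γ) ≤ γ) ∧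
      (∀ β ∈ r.support, m.IsStandard I β) ∧
      p = ∑ γ ∈ S, c γ • (monomial (γ - m.degree (g γ)) 1 * g γ) + r := by
  choose! g hgB hgγ using hB
  have hb : ∀ γ ∈ {γ | ¬ m.IsStandard I γ},
      monomial (γ - m.degree (g γ)) (1 : k) * g γ ≠ 0 ∧
        m.degree (monomial (γ - m.degree (g γ)) (1 : k) * g γ) = γ := fun γ hγ =>
    ⟨mul_ne_zero (by simp) (hB0 _ (hgB γ hγ)),
      degree_monomial_sub_degree_mul (hB0 _ (hgB γ hγ)) (hgγ γ hγ)⟩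
  obtain ⟨a, ha, r, hr, rfl⟩ := Submodule.mem_sup.1 (m.mem_span_image_sup_restrictSupport hb p)
  obtain ⟨l, hl, rfl⟩ := (Finsupp.mem_span_image_iff_linearCombination k).1 ha
  refine ⟨l.support, l, g, r, fun γ hγ => ?_, fun β hβ => ?_, rfl⟩
  · have hγ' : ¬ m.IsStandard I γ := (Finsupp.mem_supported k l).1 hl hγ
    exact ⟨Finsupp.mem_support_iff.1 hγ, hγ', hgB γ hγ', hgγ γ hγ'⟩
  · simpa using (mem_restrictSupport_iff k).1 hr hβ
theorem exists_sub_mem_of_isStandard (p : MvPolynomial σ k) :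
    ∃ r, p - r ∈ I ∧ ∀ β ∈ r.support, m.IsStandard I β := by
  obtain ⟨S, c, g, r, hS, hr, rfl⟩ := exists_eq_sum_smul_monomial_mul_add (m := m) (I := I)
    (B := {f ∈ I | f ≠ 0}) (fun g hg => hg.2)
    (fun γ hγ => by simpa [IsStandard, and_assoc] using hγ) p
  refine ⟨r, ?_, hr⟩
  rw [add_sub_cancel_right]
  exact I.sum_mem fun γ hγ => I.smul_of_tower_mem _ (I.mul_mem_left _ (hS γ hγ).2.2.1.1)

variable (m I) in
/-- A reduced Gröbner basis, up to minimality and normalisation of leading coefficients. -/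
structure IsTailReducedGroebnerBasis (G : Finset (MvPolynomial σ k)) : Prop where
  mem : ∀ g ∈ G, g ∈ I
  ne_zero : ∀ g ∈ G, g ≠ 0
  isStandard_of_ne_degree : ∀ g ∈ G, ∀ β ∈ g.support, β ≠ m.degree g → m.IsStandard I β
  exists_degree_le : ∀ γ, ¬ m.IsStandard I γ → ∃ g ∈ G, m.degree g ≤ γ

theorem IsTailReducedGroebnerBasis.exists_eq_sum {G : Finset (MvPolynomial σ k)}
    (hG : m.IsTailReducedGroebnerBasis I G) {f : MvPolynomial σ k} (hf : f ∈ I) :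
    ∃ (T : Finset (σ →₀ ℕ)) (c : (σ →₀ ℕ) → k) (g : (σ →₀ ℕ) → MvPolynomial σ k),
      (∀ γ ∈ T, c γ ≠ 0 ∧ ¬ m.IsStandard I γ ∧ g γ ∈ G ∧ m.degree (g γ) ≤ γ) ∧
      f = ∑ γ ∈ T, c γ • (monomial (γ - m.degree (g γ)) 1 * g γ) := by
  obtain ⟨T, c, g, r, hT, hr, hfr⟩ :=
    exists_eq_sum_smul_monomial_mul_add hG.ne_zero hG.exists_degree_le f
  have hsum : ∑ γ ∈ T, c γ • (monomial (γ - m.degree (g γ)) 1 * g γ) ∈ I :=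
    I.sum_mem fun γ hγ => I.smul_of_tower_mem _ (I.mul_mem_left _ (hG.mem _ (hT γ hγ).2.2.1))
  obtain rfl : r = 0 :=
    eq_zero_of_mem_of_isStandard (by simpa [hfr] using I.sub_mem hf hsum) hr
  exact ⟨T, c, g, hT, by rw [hfr, add_zero]⟩

/-- The witness is `X^α` minus its standard remainder. -/
theorem exists_tailReduced_of_not_isStandard {α : σ →₀ ℕ} (hα : ¬ m.IsStandard I α) :
    ∃ g ∈ I, g ≠ 0 ∧ m.degree g = α ∧ ∀ β ∈ g.support, β ≠ α → m.IsStandard I β := by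
  classical
  obtain ⟨r, hrI, hr⟩ := m.exists_sub_mem_of_isStandard (I := I) (monomial α 1)
  have hαr : r.coeff α = 0 := notMem_support_iff.1 fun h => hα (hr α h)
  have hcoeff : (monomial α (1 : k) - r).coeff α ≠ 0 := by simp [hαr]
  have htail : ∀ β ∈ (monomial α (1 : k) - r).support, β ≠ α → m.IsStandard I β :=
    fun β hβ hβα => hr β (by simpa [coeff_monomial, Ne.symm hβα] using hβ)
  have hg0 : monomial α (1 : k) - r ≠ 0 := fun h => hcoeff (by rw [h, coeff_zero])
  refine ⟨_, hrI, hg0, by_contra fun hne => ?_, htail⟩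
  exact not_isStandard_degree hrI hg0 (htail _ (m.degree_mem_support hg0) hne)

variable (m I) in
theorem exists_isTailReducedGroebnerBasis [Finite σ] : ∃ G, m.IsTailReducedGroebnerBasis I G := by
  classical
  set T := {α | Minimal (fun β => ¬ m.IsStandard I β) α}
  have hT : T.Finite := WellQuasiOrderedLE.finite_of_isAntichain (setOfPred_minimal_antichain _)
  choose! g hgI hg0 hgα htail using fun α (hα : α ∈ T) => exists_tailReduced_of_not_isStandard hα.1
  refine ⟨hT.toFinset.image g, ⟨?_, ?_, ?_, fun γ hγ => ?_⟩⟩ <;> simp only [Finset.mem_image,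
    Set.Finite.mem_toFinset, forall_exists_index, and_imp, forall_apply_eq_imp_iff₂]
  · exact hgI
  · exact hg0
  · exact fun α hα β hβ hne => htail α hα β hβ (hgα α hα ▸ hne)
  · obtain ⟨α, hαγ, hα⟩ :=
      (Set.isPWO_of_wellQuasiOrderedLE {β | ¬ m.IsStandard I β}).exists_le_minimal hγ
    exact ⟨g α, ⟨α, hα, rfl⟩, (hgα α hα).symm ▸ hαγ⟩

end General

section Cones

variable (m : MonomialOrder (Fin n))

def leadCone (G : Finset (MvPolynomial (Fin n) k)) : Set (Fin n → ℝ) :=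
  {x | ∀ g ∈ G, ∀ α ∈ g.support, wdeg x α ≤ wdeg x (m.degree g)}

def groebnerCone (G : Finset (MvPolynomial (Fin n) k)) (v : Fin n → ℝ) : Set (Fin n → ℝ) :=
  {x ∈ m.leadCone G | ∀ g ∈ G, ∀ α ∈ (initialForm v g).support,
    wdeg x α = wdeg x (m.degree g)}

variable {m} {I : Ideal (MvPolynomial (Fin n) k)} {G : Finset (MvPolynomial (Fin n) k)}
  {g : MvPolynomial (Fin n) k} {v x u w : Fin n → ℝ}

theorem isClosed_groebnerCone : IsClosed (m.groebnerCone G v) := by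
  simp only [groebnerCone, leadCone, Set.ofPred_and, Set.ofPred_forall]
  exact (isClosed_iInter fun g => isClosed_iInter fun _ => isClosed_iInter fun α =>
    isClosed_iInter fun _ => isClosed_le (continuous_wdeg α) (continuous_wdeg _)).inter
    (isClosed_iInter fun g => isClosed_iInter fun _ => isClosed_iInter fun α =>
      isClosed_iInter fun _ => isClosed_eq (continuous_wdeg α) (continuous_wdeg _))

theorem mem_support_initialForm_iff_of_mem_leadCone (hx : x ∈ m.leadCone G) (hg : g ∈ G)
    {α : Fin n →₀ ℕ} :
    α ∈ (initialForm x g).support ↔ α ∈ g.support ∧ wdeg x α = wdeg x (m.degree g) := by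
  rw [mem_support_initialForm]
  refine and_congr_right fun hα => ⟨fun h => le_antisymm (hx g hg α hα) ?_, fun h γ hγ => ?_⟩
  · exact h _ (m.degree_mem_support fun h0 => by simp [h0] at hα)
  · exact h ▸ hx g hg γ hγ

theorem degree_initialForm_of_mem_leadCone (hx : x ∈ m.leadCone G) (hg : g ∈ G) (hg0 : g ≠ 0) :
    m.degree (initialForm x g) = m.degree g :=
  m.degree_eq_of_forall_le
    ((mem_support_initialForm_iff_of_mem_leadCone hx hg).2 ⟨m.degree_mem_support hg0, rfl⟩)
    fun _ hα => m.le_degree (mem_support_initialForm.1 hα).1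

theorem coeff_degree_initialForm_of_mem_leadCone (hx : x ∈ m.leadCone G) (hg : g ∈ G) :
    (initialForm x g).coeff (m.degree g) = g.coeff (m.degree g) := by
  rw [coeff_initialForm, if_pos (hx g hg)]

theorem initialForm_sum_smul {T : Finset (Fin n →₀ ℕ)} (hT : T.Nonempty) {c : (Fin n →₀ ℕ) → k}
    {b : (Fin n →₀ ℕ) → MvPolynomial (Fin n) k} (hc : ∀ γ ∈ T, c γ ≠ 0)
    (hb : ∀ γ ∈ T, (∀ β ∈ (b γ).support, wdeg x β ≤ wdeg x γ) ∧
      initialForm x (b γ) ≠ 0 ∧ m.degree (initialForm x (b γ)) = γ) :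
    initialForm x (∑ γ ∈ T, c γ • b γ) =
      ∑ γ ∈ T with wdeg x γ = T.sup' hT (wdeg x), c γ • initialForm x (b γ) := by
  classical
  set D := T.sup' hT (wdeg x)
  have hγb : ∀ γ ∈ T, γ ∈ (b γ).support := fun γ hγ => by
    have h := m.degree_mem_support (hb γ hγ).2.1
    rw [(hb γ hγ).2.2] at h
    exact (mem_support_initialForm.1 h).1
  have hcomp : weightedHomogeneousComponent x D (∑ γ ∈ T, c γ • b γ) =
      ∑ γ ∈ T with wdeg x γ = D, c γ • initialForm x (b γ) := by
    simp only [map_sum, map_smul, Finset.sum_filter]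
    refine Finset.sum_congr rfl fun γ hγ => ?_
    rw [weightedHomogeneousComponent_eq_ite (hb γ hγ).1 (hγb γ hγ) rfl (T.le_sup' _ hγ)]
    split_ifs <;> simp
  obtain ⟨γ₀, hγ₀, hγ₀D⟩ := T.exists_mem_eq_sup' hT (wdeg x)
  obtain ⟨hne, -⟩ := m.sum_smul_ne_zero_and_degree_mem (S := {γ ∈ T | wdeg x γ = D})
    ⟨γ₀, Finset.mem_filter.2 ⟨hγ₀, hγ₀D.symm⟩⟩
    (fun γ hγ => hc γ (Finset.mem_filter.1 hγ).1)
    (fun γ hγ => (hb γ (Finset.mem_filter.1 hγ).1).2)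
  rw [← hcomp] at hne ⊢
  obtain ⟨β, hβ, hβD⟩ := exists_mem_support_of_weightedHomogeneousComponent_ne_zero hne
  refine initialForm_eq_weightedHomogeneousComponent (fun β hβ => ?_) hβ hβD
  obtain ⟨γ, hγ, hβγ⟩ := Finset.mem_biUnion.1 (support_sum hβ)
  exact ((hb γ hγ).1 β (support_smul hβγ)).trans (T.le_sup' _ hγ)

theorem wdeg_le_of_mem_support_monomial_mul (hx : x ∈ m.leadCone G) (hg : g ∈ G)
    {μ β : Fin n →₀ ℕ} {c : k}
    (hβ : β ∈ (monomial μ c * g).support) : wdeg x β ≤ wdeg x (μ + m.degree g) := by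
  obtain ⟨β', hβ', rfl⟩ := exists_eq_add_of_mem_support_monomial_mul hβ
  rw [wdeg_add, wdeg_add]
  linarith [hx g hg β' hβ']

theorem IsTailReducedGroebnerBasis.exists_initialForm_eq_sum
    (hG : m.IsTailReducedGroebnerBasis I G) (hx : x ∈ m.leadCone G)
    {f : MvPolynomial (Fin n) k} (hf : f ∈ I) (hf0 : f ≠ 0) :
    ∃ (S : Finset (Fin n →₀ ℕ)) (c : (Fin n →₀ ℕ) → k)
      (q : (Fin n →₀ ℕ) → MvPolynomial (Fin n) k), S.Nonempty ∧
      (∀ γ ∈ S, c γ ≠ 0 ∧ ¬ m.IsStandard I γ ∧ q γ ≠ 0 ∧ m.degree (q γ) = γ ∧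
        q γ ∈ Ideal.span (initialForm x '' G)) ∧
      initialForm x f = ∑ γ ∈ S, c γ • q γ := by
  classical
  obtain ⟨T, c, g, hT, rfl⟩ := hG.exists_eq_sum hf
  have hTne : T.Nonempty := Finset.nonempty_iff_ne_empty.2 fun h => hf0 (by simp [h])
  set b := fun γ => monomial (γ - m.degree (g γ)) (1 : k) * g γ
  have hbT : ∀ γ ∈ T, (∀ β ∈ (b γ).support, wdeg x β ≤ wdeg x γ) ∧
      initialForm x (b γ) ≠ 0 ∧ m.degree (initialForm x (b γ)) = γ := fun γ hγ => by
    obtain ⟨-, -, hgG, hgγ⟩ := hT γ hγ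
    have hg0 := hG.ne_zero _ hgG
    refine ⟨fun β hβ => ?_, initialForm_ne_zero (mul_ne_zero (by simp) hg0), ?_⟩
    · simpa [tsub_add_cancel_of_le hgγ] using wdeg_le_of_mem_support_monomial_mul hx hgG hβ
    · rw [initialForm_monomial_mul x _ one_ne_zero,
        m.degree_mul (by simp) (initialForm_ne_zero hg0),
        degree_initialForm_of_mem_leadCone hx hgG hg0, degree_monomial, if_neg one_ne_zero,
        tsub_add_cancel_of_le hgγ]
  have hspan : ∀ γ ∈ T, initialForm x (b γ) ∈ Ideal.span (initialForm x '' G) := fun γ hγ => by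
    rw [initialForm_monomial_mul x _ one_ne_zero]
    exact Ideal.mul_mem_left _ _ (Ideal.subset_span ⟨g γ, (hT γ hγ).2.2.1, rfl⟩)
  obtain ⟨γ₀, hγ₀, hγ₀D⟩ := T.exists_mem_eq_sup' hTne (wdeg x)
  refine ⟨{γ ∈ T | wdeg x γ = T.sup' hTne (wdeg x)}, c, fun γ => initialForm x (b γ),
    ⟨γ₀, Finset.mem_filter.2 ⟨hγ₀, hγ₀D.symm⟩⟩, fun γ hγ => ?_,
    initialForm_sum_smul hTne (fun γ hγ => (hT γ hγ).1) hbT⟩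
  obtain ⟨hγT, -⟩ := Finset.mem_filter.1 hγ
  exact ⟨(hT γ hγT).1, (hT γ hγT).2.1, (hbT γ hγT).2.1, (hbT γ hγT).2.2, hspan γ hγT⟩

namespace IsTailReducedGroebnerBasis

variable (hG : m.IsTailReducedGroebnerBasis I G)
include hG

theorem initialForm_mem_span (hx : x ∈ m.leadCone G) {f : MvPolynomial (Fin n) k} (hf : f ∈ I) :
    initialForm x f ∈ Ideal.span (initialForm x '' G) := by
  rcases eq_or_ne f 0 with rfl | hf0
  · rw [initialForm_zero]
    exact Ideal.zero_mem _
  obtain ⟨S, c, q, -, hS, heq⟩ := hG.exists_initialForm_eq_sum hx hf hf0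
  rw [heq]
  exact Ideal.sum_mem _ fun γ hγ => Submodule.smul_of_tower_mem _ _ (hS γ hγ).2.2.2.2

theorem initialFormIdeal_eq_span (hx : x ∈ m.leadCone G) :
    initialFormIdeal x I = Ideal.span (initialForm x '' G) := by
  refine le_antisymm (Ideal.span_le.2 ?_) (Ideal.span_le.2 ?_)
  · rintro _ ⟨f, hf, rfl⟩
    exact hG.initialForm_mem_span hx hf
  · rintro _ ⟨g, hg, rfl⟩
    exact Ideal.subset_span ⟨g, hG.mem g hg, rfl⟩

theorem not_isStandard_degree_initialForm (hx : x ∈ m.leadCone G) {f : MvPolynomial (Fin n) k}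
    (hf : f ∈ I) (hf0 : f ≠ 0) : ¬ m.IsStandard I (m.degree (initialForm x f)) := by
  obtain ⟨S, c, q, hSne, hS, heq⟩ := hG.exists_initialForm_eq_sum hx hf hf0
  obtain ⟨-, hmem⟩ := m.sum_smul_ne_zero_and_degree_mem hSne (fun γ hγ => (hS γ hγ).1)
    fun γ hγ => ⟨(hS γ hγ).2.2.1, (hS γ hγ).2.2.2.1⟩
  rw [heq]
  exact (hS _ hmem).2.1

theorem eq_zero_of_mem_initialFormIdeal (hx : x ∈ m.leadCone G) {p : MvPolynomial (Fin n) k}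
    (hp : p ∈ initialFormIdeal x I) (hstd : ∀ β ∈ p.support, m.IsStandard I β) : p = 0 := by
  -- A nonzero weighted component of `p` is the initial form of an element of `I`.
  classical
  by_contra hp0
  obtain ⟨β, hβ⟩ := ne_zero_iff.1 hp0
  have hpd : weightedHomogeneousComponent x (wdeg x β) p ≠ 0 :=
    ne_zero_iff.2 ⟨β, by rwa [coeff_weightedHomogeneousComponent_wdeg, if_pos rfl]⟩
  obtain ⟨f, hf, hfd, hpf⟩ := exists_mem_weightedHomogeneousComponent_eq hp (wdeg x β)
  obtain ⟨γ, hγ, hγd⟩ := exists_mem_support_of_weightedHomogeneousComponent_ne_zero (hpf ▸ hpd)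
  have hf0 : f ≠ 0 := by
    rintro rfl
    exact hpd (by rw [hpf, map_zero])
  apply hG.not_isStandard_degree_initialForm hx hf hf0
  rw [initialForm_eq_weightedHomogeneousComponent hfd hγ hγd, ← hpf]
  exact hstd _ (support_weightedHomogeneousComponent_subset x _ (m.degree_mem_support hpd))

theorem mem_leadCone_of_initialFormIdeal_eq (hw : w ∈ m.leadCone G)
    (h : initialFormIdeal u I = initialFormIdeal w I) : u ∈ m.leadCone G := by
  intro g hg α hα
  by_contra hlt
  refine initialForm_ne_zero (hG.ne_zero g hg) (hG.eq_zero_of_mem_initialFormIdeal hw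
    (h ▸ initialForm_mem_initialFormIdeal u (hG.mem g hg)) fun β hβ => ?_)
  obtain ⟨hβg, hβmax⟩ := mem_support_initialForm.1 hβ
  refine hG.isStandard_of_ne_degree g hg β hβg ?_
  rintro rfl
  exact hlt (hβmax α hα)

theorem initialForm_eq_of_initialFormIdeal_eq (hw : w ∈ m.leadCone G)
    (h : initialFormIdeal u I = initialFormIdeal w I) (hg : g ∈ G) :
    initialForm u g = initialForm w g := by
  classical
  have hu := hG.mem_leadCone_of_initialFormIdeal_eq hw h
  rw [← sub_eq_zero]
  refine hG.eq_zero_of_mem_initialFormIdeal hw (Ideal.sub_mem _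
    (h ▸ initialForm_mem_initialFormIdeal u (hG.mem g hg))
    (initialForm_mem_initialFormIdeal w (hG.mem g hg)))
    fun β hβ => hG.isStandard_of_ne_degree g hg β ?_ ?_
  · rcases Finset.mem_union.1 (support_sub _ _ _ hβ) with hβ | hβ <;>
      exact (mem_support_initialForm.1 hβ).1
  · rintro rfl
    rw [mem_support_iff, coeff_sub, coeff_degree_initialForm_of_mem_leadCone hu hg,
      coeff_degree_initialForm_of_mem_leadCone hw hg, sub_self] at hβ
    exact hβ rfl

theorem wdeg_eq_of_initialFormIdeal_eq (hw : w ∈ m.leadCone G)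
    (h : initialFormIdeal u I = initialFormIdeal w I) (hg : g ∈ G) {α : Fin n →₀ ℕ}
    (hα : α ∈ g.support) (hwα : wdeg w α = wdeg w (m.degree g)) :
    wdeg u α = wdeg u (m.degree g) := by
  have hα' := (mem_support_initialForm_iff_of_mem_leadCone hw hg).2 ⟨hα, hwα⟩
  rw [← hG.initialForm_eq_of_initialFormIdeal_eq hw h hg,
    mem_support_initialForm_iff_of_mem_leadCone (hG.mem_leadCone_of_initialFormIdeal_eq hw h)
      hg] at hα'
  exact hα'.2

theorem mem_groebnerCone_of_initialFormIdeal_eq (hw : w ∈ m.groebnerCone G v)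
    (h : initialFormIdeal u I = initialFormIdeal w I) : u ∈ m.groebnerCone G v :=
  ⟨hG.mem_leadCone_of_initialFormIdeal_eq hw.1 h, fun g hg α hα =>
    hG.wdeg_eq_of_initialFormIdeal_eq hw.1 h hg (mem_support_initialForm.1 hα).1 (hw.2 g hg α hα)⟩

/-- Since the facets of the Gröbner cone that contain `w` also contain `u`, the cone contains
the points of the line through `u` and `w` slightly beyond `w`. -/
theorem exists_pos_smul_sub_smul_mem_groebnerCone (hw : w ∈ m.groebnerCone G v)
    (h : initialFormIdeal u I = initialFormIdeal w I) :
    ∃ ε : ℝ, 0 < ε ∧ (1 + ε) • w - ε • u ∈ m.groebnerCone G v := by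
  have hall : ∀ᶠ ε in 𝓝[>] (0 : ℝ), ∀ g ∈ G, ∀ α ∈ g.support,
      ε * (wdeg u (m.degree g) - wdeg u α) ≤ (1 + ε) * (wdeg w (m.degree g) - wdeg w α) :=
    G.eventually_all.2 fun g hg => g.support.eventually_all.2 fun α hα =>
      eventually_mul_le_one_add_mul (sub_nonneg.2 (hw.1 g hg α hα)) fun h0 =>
        sub_eq_zero.2 (hG.wdeg_eq_of_initialFormIdeal_eq hw.1 h hg hα
          (sub_eq_zero.1 h0).symm).symm
  obtain ⟨ε, hε, hεpos⟩ := (hall.and self_mem_nhdsWithin).exists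
  have hwdeg : ∀ α, wdeg ((1 + ε) • w - ε • u) α = (1 + ε) * wdeg w α - ε * wdeg u α := by
    intro α
    rw [sub_eq_add_neg, ← neg_smul, wdeg_smul_add_smul]
    ring
  refine ⟨ε, hεpos, fun g hg α hα => ?_, fun g hg α hα => ?_⟩
  · rw [hwdeg, hwdeg]
    linarith [hε g hg α hα]
  · have hαg := (mem_support_initialForm.1 hα).1
    rw [hwdeg, hwdeg, hw.2 g hg α hα,
      hG.wdeg_eq_of_initialFormIdeal_eq hw.1 h hg hαg (hw.2 g hg α hα)]

theorem initialFormIdeal_one_sub_smul_add_smul_eq (hv : v ∈ m.leadCone G)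
    (hx : x ∈ m.groebnerCone G v)
    {t : ℝ} (ht₀ : 0 < t) (ht₁ : t ≤ 1) :
    initialFormIdeal ((1 - t) • x + t • v) I = initialFormIdeal v I := by
  have hy : (1 - t) • x + t • v ∈ m.leadCone G := fun g hg α hα => by
    rw [wdeg_smul_add_smul, wdeg_smul_add_smul]
    nlinarith [hx.1 g hg α hα, hv g hg α hα]
  rw [hG.initialFormIdeal_eq_span hy, hG.initialFormIdeal_eq_span hv]
  refine congrArg Ideal.span (Set.image_congr fun g hg => initialForm_eq_of_support_eq ?_)
  ext α
  rw [mem_support_initialForm_iff_of_mem_leadCone hy hg,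
    mem_support_initialForm_iff_of_mem_leadCone hv hg,
    wdeg_smul_add_smul, wdeg_smul_add_smul]
  refine and_congr_right fun hαg => ⟨fun h => ?_, fun h => ?_⟩
  · have h₁ := mul_nonneg (sub_nonneg.2 ht₁) (sub_nonneg.2 (hx.1 g hg α hαg))
    have h₂ := mul_nonneg ht₀.le (sub_nonneg.2 (hv g hg α hαg))
    have h₃ : t * (wdeg v (m.degree g) - wdeg v α) = 0 := by linarith
    linarith [(mul_eq_zero.1 h₃).resolve_left ht₀.ne']
  · have hxα := hx.2 g hg α ((mem_support_initialForm_iff_of_mem_leadCone hv hg).2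
      ⟨hαg, h⟩)
    rw [hxα, h]

end IsTailReducedGroebnerBasis

end Cones

noncomputable def weightLexKey (v : Fin n → ℝ) : (Fin n →₀ ℕ) →+ ℝ ×ₗ Lex (Fin n →₀ ℕ) where
  toFun α := toLex (wdeg v α, toLex α)
  map_zero' := by simp [wdeg]
  map_add' α β := by rw [wdeg_add]; rfl

theorem weightLexKey_injective (v : Fin n → ℝ) : Function.Injective (weightLexKey v) :=
  fun α β h => by simpa [weightLexKey] using congrArg (fun p => ofLex (ofLex p).2) h

theorem weightLexKey_le_iff {v : Fin n → ℝ} {α β : Fin n →₀ ℕ} :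
    weightLexKey v α ≤ weightLexKey v β ↔
      wdeg v α ≤ wdeg v β ∧ (wdeg v α = wdeg v β → toLex α ≤ toLex β) :=
  Prod.Lex.toLex_le_toLex'

theorem wellFoundedLT_mrange_weightLexKey {v : Fin n → ℝ} (hv : ∀ i, 0 < v i) :
    WellFoundedLT (AddMonoidHom.mrange (weightLexKey v)) := by
  refine ⟨Subrelation.wf (fun {s t} (hst : s < t) => ?_)
    (InvImage.wf (fun t : AddMonoidHom.mrange (weightLexKey v) =>
      {α | weightLexKey v α < t}.ncard) wellFounded_lt)⟩
  obtain ⟨⟨α, hα⟩, ⟨β, hβ⟩⟩ := And.intro s.2 t.2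
  have hst' : weightLexKey v α < weightLexKey v β := by rw [hα, hβ]; exact hst
  show Set.ncard {γ | weightLexKey v γ < s} < Set.ncard {γ | weightLexKey v γ < t}
  rw [← hα, ← hβ]
  refine Set.ncard_lt_ncard ((Set.ssubset_iff_of_subset fun γ hγ => lt_trans hγ hst').2
    ⟨α, hst', fun h => lt_irrefl (weightLexKey v α) h⟩)
    ((finite_setOf_wdeg_le hv (wdeg v β)).subset fun γ hγ => ?_)
  exact (weightLexKey_le_iff.1 (le_of_lt hγ)).1

noncomputable def weightLexEquiv (v : Fin n → ℝ) :
    (Fin n →₀ ℕ) ≃+ AddMonoidHom.mrange (weightLexKey v) :=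
  AddEquiv.ofBijective (weightLexKey v).mrangeRestrict
    ⟨fun _ _ h => weightLexKey_injective v (congrArg Subtype.val h),
      AddMonoidHom.mrangeRestrict_surjective _⟩

noncomputable def weightLex (v : Fin n → ℝ) (hv : ∀ i, 0 < v i) : MonomialOrder (Fin n) where
  syn := AddMonoidHom.mrange (weightLexKey v)
  toSyn := weightLexEquiv v
  toSyn_monotone _ _ h :=
    weightLexKey_le_iff.2 ⟨wdeg_mono (fun i => (hv i).le) h, fun _ => Finsupp.toLex_monotone h⟩
  wellFoundedLT_syn := wellFoundedLT_mrange_weightLexKey hv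

theorem wdeg_le_of_weightLex_le {v : Fin n → ℝ} {hv : ∀ i, 0 < v i} {α β : Fin n →₀ ℕ}
    (h : (weightLex v hv).toSyn α ≤ (weightLex v hv).toSyn β) : wdeg v α ≤ wdeg v β :=
  (weightLexKey_le_iff.1 (by exact h)).1

end MonomialOrder

section WeightCone

open MonomialOrder

variable {v : Fin n → ℝ} (hv : ∀ i, 0 < v i) {I : Ideal (MvPolynomial (Fin n) k)}
  {G : Finset (MvPolynomial (Fin n) k)}

theorem mem_leadCone_weightLex : v ∈ (weightLex v hv).leadCone G :=
  fun _ _ _ hα => wdeg_le_of_weightLex_le ((weightLex v hv).le_degree hα)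

theorem mem_groebnerCone_weightLex : v ∈ (weightLex v hv).groebnerCone G v :=
  ⟨mem_leadCone_weightLex hv, fun _ hg _ hα =>
    ((mem_support_initialForm_iff_of_mem_leadCone (mem_leadCone_weightLex hv) hg).1 hα).2⟩

theorem Cv_eq_groebnerCone (hG : (weightLex v hv).IsTailReducedGroebnerBasis I G) :
    Cv I v = (weightLex v hv).groebnerCone G v := by
  refine (closure_minimal (fun u hu => hG.mem_groebnerCone_of_initialFormIdeal_eq
    (mem_groebnerCone_weightLex hv) hu) isClosed_groebnerCone).antisymm fun x hx => ?_
  have htend : Tendsto (fun t : ℝ => (1 - t) • x + t • v) (𝓝[>] 0) (𝓝 x) := by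
    have h : Continuous fun t : ℝ => (1 - t) • x + t • v := by fun_prop
    simpa using (h.tendsto 0).mono_left nhdsWithin_le_nhds
  refine mem_closure_of_tendsto htend ?_
  filter_upwards [Ioc_mem_nhdsGT zero_lt_one] with t ht
  exact hG.initialFormIdeal_one_sub_smul_add_smul_eq (mem_leadCone_weightLex hv) hx ht.1 ht.2

end WeightCone

theorem mem_cone_of_initialFormIdeal_eq_general (I : Ideal (MvPolynomial (Fin n) k))
    (v : Fin n → ℝ) (hv : ∀ i, 0 < v i)
    (C : Set (Fin n → ℝ)) (hC : IsFaceOf (Cv I v) C)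
    (w : Fin n → ℝ) (hw : w ∈ C)
    (u : Fin n → ℝ) (hu : initialFormIdeal u I = initialFormIdeal w I) :
    u ∈ C := by
  obtain ⟨G, hG⟩ := (MonomialOrder.weightLex v hv).exists_isTailReducedGroebnerBasis I
  rw [Cv_eq_groebnerCone hv hG] at hC
  have hwK := hC.subset hw
  obtain ⟨ε, hε, hp⟩ := hG.exists_pos_smul_sub_smul_mem_groebnerCone hwK hu
  exact hC.mem_of_smul_sub_smul_mem hw (hG.mem_groebnerCone_of_initialFormIdeal_eq hwK hu) hε hp

/-- If `C` is a cone in the Gröbner fan of `I` (a nonempty face of some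
`C_v(I)`, `v ∈ ℝ^n_{>0}`), `w ∈ C` and `in_u(I) = in_w(I)`, then `u ∈ C`. -/
theorem mem_cone_of_initialFormIdeal_eq (I : Ideal (MvPolynomial (Fin n) k))
    (v : Fin n → ℝ) (hv : ∀ i, 0 < v i)
    (C : Set (Fin n → ℝ)) (hC : IsFaceOf (Cv I v) C) (hCne : C.Nonempty)
    (w : Fin n → ℝ) (hw : w ∈ C)
    (u : Fin n → ℝ) (hu : initialFormIdeal u I = initialFormIdeal w I) :
    u ∈ C :=
  mem_cone_of_initialFormIdeal_eq_general I v hv C hC w hw u hu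
end

section
/- Let (A, 𝒜) be a grading on R = k[x_1,…,x_n], let I ⊆ R be an 𝒜-homogeneous ideal, let ≤_1 and ≤_2 be two term orders, and let a ∈ A. If f_1^1, …, f_s^1 is a k-vector space basis of I_a such that in_{≤_1}(f_1^1), …, in_{≤_1}(f_s^1) is a basis of (in_{≤_1}(I))_a, then there exists a basis f_1^2, …, f_s^2 of I_a such that in_{≤_2}(f_1^2), …, in_{≤_2}(f_s^2) is a basis of (in_{≤_2}(I))_a and in_{≤_2}(f_i^2) ≤_1 in_{≤_1}(f_i^1) for every i = 1, …, s. -/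
open MvPolynomial

variable {n : ℕ} {k : Type*} [Field k]

/-- For a grading `𝒜 : ℕ^n → A`, the `k`-subspace `R_a` of `𝒜`-homogeneous
polynomials of degree `a` (all monomials in the support have `𝒜`-degree `a`). -/
def gradedPiece {A : Type*} (𝒜 : (Fin n →₀ ℕ) → A) (a : A) :
    Submodule k (MvPolynomial (Fin n) k) where
  carrier := {f | ∀ b ∈ f.support, 𝒜 b = a}
  add_mem' := by
    intro f g hf hg b hb
    rcases Finset.mem_union.mp (MvPolynomial.support_add hb) with h | h
    · exact hf b h
    · exact hg b h
  zero_mem' := by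
    intro b hb
    simp at hb
  smul_mem' := by
    intro c f hf b hb
    exact hf b (MvPolynomial.support_smul hb)

/-- An ideal is `𝒜`-homogeneous if it is generated by `𝒜`-homogeneous polynomials. -/
def IsHomogeneousIdeal {A : Type*} (𝒜 : (Fin n →₀ ℕ) → A)
    (I : Ideal (MvPolynomial (Fin n) k)) : Prop :=
  ∃ S : Set (MvPolynomial (Fin n) k), I = Ideal.span S ∧
    ∀ f ∈ S, ∃ a : A, ∀ b ∈ f.support, 𝒜 b = a

/-!
For a term order `τ`, the lead exponents of the nonzero elements of a finite-dimensional space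
`W` of polynomials are exactly `dim W` many: one element per lead exponent gives a triangular,
hence independent, family, and reading off the coefficients at the lead exponents is injective
on `W`. Applied to `W = I_a ∩ {f : supp f ≤₁ β}` for both orders, this shows that below every
`β` (in `≤₁`) there are at least as many `≤₂`-lead exponents of `I_a` as `≤₁`-lead exponents.
Hence matching the `i`-th smallest elements (in `≤₁`) of the two sets of lead exponents lowers
`≤₁`, and elements of `I_a` with the matched `≤₂`-lead exponents form the required basis. Their
`≤₂`-initial terms span `(in_{≤₂} I)_a` because `in(I)` is the monomial ideal of the lead
exponents and `I` contains the homogeneous components of its elements.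
-/

open MvPolynomial Function Set

theorem Finset.orderEmbOfFin_le_of_card_filter_le {X : Type*} [LinearOrder X] {S T : Finset X}
    {m : ℕ} (hS : S.card = m) (hT : T.card = m)
    (h : ∀ β, (S.filter (· ≤ β)).card ≤ (T.filter (· ≤ β)).card) (i : Fin m) :
    T.orderEmbOfFin hT i ≤ S.orderEmbOfFin hS i := by
  by_contra! hlt
  have hS' : (Finset.Iic i).map (S.orderEmbOfFin hS).toEmbedding ⊆
      S.filter (· ≤ S.orderEmbOfFin hS i) := by
    intro x hx
    obtain ⟨j, hj, rfl⟩ := Finset.mem_map.mp hx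
    exact Finset.mem_filter.mpr
      ⟨S.orderEmbOfFin_mem hS j, (S.orderEmbOfFin hS).monotone (Finset.mem_Iic.mp hj)⟩
  have hT' : T.filter (· ≤ S.orderEmbOfFin hS i) ⊆
      (Finset.Iio i).map (T.orderEmbOfFin hT).toEmbedding := by
    intro x hx
    obtain ⟨hxT, hxle⟩ := Finset.mem_filter.mp hx
    obtain ⟨j, rfl⟩ : x ∈ Set.range (T.orderEmbOfFin hT) := by
      rwa [Finset.range_orderEmbOfFin]
    exact Finset.mem_map_of_mem _
      (Finset.mem_Iio.mpr ((T.orderEmbOfFin hT).lt_iff_lt.mp (hxle.trans_lt hlt)))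
  have := (Finset.card_le_card hS').trans ((h _).trans (Finset.card_le_card hT'))
  simp only [Finset.card_map, Fin.card_Iic, Fin.card_Iio] at this
  omega

theorem exists_equiv_le_of_ncard_sep_le {X : Type*} [LinearOrder X] {s t : Set X}
    (hs : s.Finite) (ht : t.Finite) (hst : s.ncard = t.ncard)
    (h : ∀ β, {x ∈ s | x ≤ β}.ncard ≤ {x ∈ t | x ≤ β}.ncard) :
    ∃ σ : s ≃ t, ∀ x, (σ x : X) ≤ x := by
  obtain ⟨S, rfl⟩ := hs.exists_finset_coe
  obtain ⟨T, rfl⟩ := ht.exists_finset_coe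
  rw [ncard_coe_finset, ncard_coe_finset] at hst
  refine ⟨((S.orderIsoOfFin rfl).symm.trans (T.orderIsoOfFin hst.symm)).toEquiv, fun x => ?_⟩
  have := Finset.orderEmbOfFin_le_of_card_filter_le rfl hst.symm
    (fun β => by
      rw [← ncard_coe_finset, ← ncard_coe_finset, Finset.coe_filter, Finset.coe_filter]
      exact h β)
    ((S.orderIsoOfFin rfl).symm x)
  simpa [← Finset.coe_orderIsoOfFin_apply] using this


namespace TermOrder

variable (τ : TermOrder n)

theorem asymm {α β : Fin n →₀ ℕ} (h : τ.lt α β) : ¬ τ.lt β α :=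
  fun h' => τ.irrefl α (τ.trans _ _ _ h h')

/-- Not an instance: `Fin n →₀ ℕ` already carries the pointwise order. -/
noncomputable abbrev toLinearOrder : LinearOrder (Fin n →₀ ℕ) :=
  haveI : IsStrictTotalOrder (Fin n →₀ ℕ) τ.lt :=
    { trichotomous := fun α β hαβ hβα => by_contra fun hne =>
        (τ.total α β hne).elim hαβ hβα
      irrefl := τ.irrefl
      trans := τ.trans }
  haveI := Classical.decRel τ.lt
  linearOrderOfSTO τ.lt

theorem eq_or_lt_trans {α β γ : Fin n →₀ ℕ} (h₁ : α = β ∨ τ.lt α β) (h₂ : β = γ ∨ τ.lt β γ) :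
    α = γ ∨ τ.lt α γ :=
  @le_trans _ τ.toLinearOrder.toPreorder _ _ _ h₁ h₂

theorem exists_max {s : Finset (Fin n →₀ ℕ)} (hs : s.Nonempty) :
    ∃ α ∈ s, ∀ β ∈ s, β ≠ α → τ.lt β α :=
  ⟨@Finset.max' _ τ.toLinearOrder s hs, @Finset.max'_mem _ τ.toLinearOrder s hs,
    fun β hβ hne => (@Finset.le_max' _ τ.toLinearOrder s β hβ).resolve_left hne⟩

variable {τ} {f g : MvPolynomial (Fin n) k}

theorem leadExp_spec (hf : f ≠ 0) :
    τ.leadExp f ∈ f.support ∧ ∀ β ∈ f.support, β ≠ τ.leadExp f → τ.lt β (τ.leadExp f) := by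
  have h := τ.exists_max (support_nonempty.mpr hf)
  rw [leadExp, dif_pos h]
  exact h.choose_spec

theorem leadExp_mem_support (hf : f ≠ 0) : τ.leadExp f ∈ f.support :=
  (leadExp_spec hf).1

theorem coeff_leadExp_ne_zero (hf : f ≠ 0) : f.coeff (τ.leadExp f) ≠ 0 :=
  mem_support_iff.mp (leadExp_mem_support hf)

theorem eq_or_lt_leadExp {β : Fin n →₀ ℕ} (hβ : β ∈ f.support) :
    β = τ.leadExp f ∨ τ.lt β (τ.leadExp f) :=
  (eq_or_ne _ _).imp_right ((leadExp_spec (support_nonempty.mp ⟨β, hβ⟩)).2 β hβ)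

theorem coeff_eq_zero_of_leadExp_lt {β : Fin n →₀ ℕ} (h : τ.lt (τ.leadExp f) β) :
    f.coeff β = 0 := by
  by_contra hβ
  rcases eq_or_lt_leadExp (τ := τ) (mem_support_iff.mpr hβ) with rfl | hlt
  · exact τ.irrefl _ h
  · exact τ.asymm h hlt

theorem leadExp_eq_of_mem_support {α : Fin n →₀ ℕ} (hα : α ∈ f.support)
    (hmax : ∀ β ∈ f.support, β ≠ α → τ.lt β α) : τ.leadExp f = α :=
  by_contra fun hne =>
    τ.asymm (hmax _ (leadExp_mem_support (support_nonempty.mp ⟨α, hα⟩)) hne)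
      ((leadExp_spec (support_nonempty.mp ⟨α, hα⟩)).2 α hα (Ne.symm hne))

theorem leadExp_eq_of_support_subset (hsub : g.support ⊆ f.support)
    (hmem : τ.leadExp f ∈ g.support) : τ.leadExp g = τ.leadExp f :=
  leadExp_eq_of_mem_support hmem fun β hβ =>
    (leadExp_spec (support_nonempty.mp ⟨_, hsub hmem⟩)).2 β (hsub hβ)

theorem leadExp_monomial_mul (γ : Fin n →₀ ℕ) (hf : f ≠ 0) :
    τ.leadExp (monomial γ (1 : k) * f) = γ + τ.leadExp f := by
  refine leadExp_eq_of_mem_support ?_ fun β hβ hne => ?_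
  · rw [mem_support_iff, coeff_monomial_mul, one_mul]
    exact coeff_leadExp_ne_zero hf
  · rw [mem_support_iff, coeff_monomial_mul'] at hβ
    split_ifs at hβ with hγβ
    · obtain ⟨δ, rfl⟩ := exists_add_of_le hγβ
      rw [add_tsub_cancel_left, one_mul] at hβ
      rw [add_comm γ, add_comm γ]
      exact τ.add_right _ _ _ ((eq_or_lt_leadExp (mem_support_iff.mpr hβ)).resolve_left
        (fun h => hne (by rw [h])))
    · exact absurd rfl hβ

theorem initialTerm_eq_smul (f : MvPolynomial (Fin n) k) :
    τ.initialTerm f = f.coeff (τ.leadExp f) • monomial (τ.leadExp f) 1 := by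
  rw [initialTerm, smul_monomial, smul_eq_mul, mul_one]

theorem initialTerm_ne_zero (hf : f ≠ 0) : τ.initialTerm f ≠ 0 := by
  rw [initialTerm, Ne, monomial_eq_zero]
  exact coeff_leadExp_ne_zero hf

theorem leadExp_initialTerm (hf : f ≠ 0) : τ.leadExp (τ.initialTerm f) = τ.leadExp f := by
  classical
  refine leadExp_eq_of_mem_support ?_ fun β hβ hne => ?_ <;>
    simp_all [initialTerm, support_monomial, coeff_leadExp_ne_zero hf]

theorem linearIndependent_of_injective_leadExp {ι : Type*} {v : ι → MvPolynomial (Fin n) k}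
    (hv : ∀ i, v i ≠ 0) (hinj : Injective fun i => τ.leadExp (v i)) :
    LinearIndependent k v := by
  rw [linearIndependent_iff]
  intro l hl
  by_contra hl0
  obtain ⟨_, hmem, hmax⟩ :=
    τ.exists_max ((Finsupp.support_nonempty_iff.2 hl0).image fun i => τ.leadExp (v i))
  obtain ⟨i₀, hi₀, rfl⟩ := Finset.mem_image.mp hmem
  have hcoeff : (Finsupp.linearCombination k v l).coeff (τ.leadExp (v i₀)) =
      l i₀ * (v i₀).coeff (τ.leadExp (v i₀)) := by
    rw [Finsupp.linearCombination_apply, Finsupp.sum, coeff_sum, Finset.sum_eq_single i₀]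
    · rw [coeff_smul, smul_eq_mul]
    · intro i hi hne
      rw [coeff_smul, coeff_eq_zero_of_leadExp_lt
        (hmax _ (Finset.mem_image_of_mem _ hi) (hinj.ne hne)), smul_zero]
    · exact fun h => absurd hi₀ h
  rw [hl, coeff_zero] at hcoeff
  exact mul_ne_zero (Finsupp.mem_support_iff.1 hi₀) (coeff_leadExp_ne_zero (hv i₀)) hcoeff.symm

theorem injective_leadExp_of_linearIndependent {ι : Type*} {v : ι → MvPolynomial (Fin n) k}
    (h : LinearIndependent k fun i => τ.initialTerm (v i)) :
    Injective fun i => τ.leadExp (v i) := by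
  have hc : ∀ i, (v i).coeff (τ.leadExp (v i)) ≠ 0 := fun i hi =>
    h.ne_zero i (by rw [initialTerm, hi, monomial_zero])
  intro i j hij
  refine h.eq_of_smul_apply_eq_smul_apply _ ((v i).coeff (τ.leadExp (v i))) i j (hc j) ?_
  simp only [initialTerm, smul_monomial, smul_eq_mul] at hij ⊢
  rw [hij, mul_comm]

theorem span_initialTerm {ι : Type*} {v : ι → MvPolynomial (Fin n) k} (hv : ∀ i, v i ≠ 0) :
    Submodule.span k (range fun i => τ.initialTerm (v i)) =
      Submodule.span k ((monomial · 1) '' range fun i => τ.leadExp (v i)) := by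
  apply le_antisymm <;> rw [Submodule.span_le]
  · rintro _ ⟨i, rfl⟩
    dsimp only
    rw [SetLike.mem_coe, initialTerm_eq_smul]
    exact Submodule.smul_mem _ _ (Submodule.subset_span ⟨_, ⟨i, rfl⟩, rfl⟩)
  · rintro _ ⟨_, ⟨i, rfl⟩, rfl⟩
    have h := coeff_leadExp_ne_zero (τ := τ) (hv i)
    dsimp only
    rw [SetLike.mem_coe, ← inv_smul_smul₀ h (monomial (τ.leadExp (v i)) (1 : k)),
      ← initialTerm_eq_smul]
    exact Submodule.smul_mem _ _ (Submodule.subset_span ⟨i, rfl⟩)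

end TermOrder

namespace TermOrder

variable (τ : TermOrder n) (W : Submodule k (MvPolynomial (Fin n) k))

def leadExps : Set (Fin n →₀ ℕ) :=
  {α | ∃ f ∈ W, f ≠ 0 ∧ τ.leadExp f = α}

variable [FiniteDimensional k W]

theorem finite_leadExps_and_ncard_le_finrank :
    (τ.leadExps W).Finite ∧ (τ.leadExps W).ncard ≤ Module.finrank k W := by
  choose g hgW hg0 hglead using fun α : τ.leadExps W => α.2
  have hli : LinearIndependent k fun α => (⟨g α, hgW α⟩ : W) :=
    .of_comp W.subtype <| τ.linearIndependent_of_injective_leadExp (v := g) hg0 fun α β h =>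
      Subtype.ext (by simpa only [hglead] using h)
  have := hli.finite
  have := Fintype.ofFinite (τ.leadExps W)
  refine ⟨toFinite _, ?_⟩
  rw [← Nat.card_coe_set_eq, Nat.card_eq_fintype_card]
  exact hli.fintype_card_le_finrank

theorem finite_leadExps : (τ.leadExps W).Finite :=
  (τ.finite_leadExps_and_ncard_le_finrank W).1

theorem ncard_leadExps : (τ.leadExps W).ncard = Module.finrank k W := by
  refine le_antisymm (τ.finite_leadExps_and_ncard_le_finrank W).2 ?_
  have := (τ.finite_leadExps W).fintype
  let coeffs : W →ₗ[k] τ.leadExps W → k :=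
    (LinearMap.pi fun α : τ.leadExps W => lcoeff k (α : Fin n →₀ ℕ)) ∘ₗ W.subtype
  have hinj : Injective coeffs := by
    refine (injective_iff_map_eq_zero coeffs).mpr fun f hf => by_contra fun hf0 => ?_
    have hf0' : (f : MvPolynomial (Fin n) k) ≠ 0 := by simpa using hf0
    exact coeff_leadExp_ne_zero hf0' (congr_fun hf ⟨_, f, f.2, hf0', rfl⟩)
  rw [← Nat.card_coe_set_eq, Nat.card_eq_fintype_card, ← Module.finrank_fintype_fun_eq_card k]
  exact LinearMap.finrank_le_finrank_of_injective hinj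

theorem range_leadExp_eq_leadExps {ι : Type*} [Fintype ι] {v : ι → MvPolynomial (Fin n) k}
    (hspan : Submodule.span k (range v) = W)
    (hli : LinearIndependent k fun i => τ.initialTerm (v i)) :
    range (fun i => τ.leadExp (v i)) = τ.leadExps W := by
  have hv : ∀ i, v i ≠ 0 := fun i h =>
    hli.ne_zero i (by rw [h, initialTerm, coeff_zero, monomial_zero])
  have hinj := τ.injective_leadExp_of_linearIndependent hli
  refine eq_of_subset_of_ncard_le (range_subset_iff.mpr fun i =>
    ⟨v i, hspan ▸ Submodule.subset_span (mem_range_self i), hv i, rfl⟩) ?_ (τ.finite_leadExps W)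
  rw [τ.ncard_leadExps, ncard_range_of_injective hinj, ← hspan, Nat.card_eq_fintype_card]
  exact finrank_range_le_card v

theorem exists_basis_leadExp_eq {ι : Type*} [Fintype ι] (ψ : ι ≃ τ.leadExps W) :
    ∃ v : ι → MvPolynomial (Fin n) k, (∀ i, v i ∈ W) ∧ LinearIndependent k v ∧
      Submodule.span k (range v) = W ∧ LinearIndependent k (fun i => τ.initialTerm (v i)) ∧
      Submodule.span k (range fun i => τ.initialTerm (v i)) =
        Submodule.span k ((monomial · 1) '' τ.leadExps W) ∧
      ∀ i, τ.leadExp (v i) = ψ i := by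
  choose g hgW hg0 hglead using fun α : τ.leadExps W => α.2
  have hlead : (fun i => τ.leadExp (g (ψ i))) = Subtype.val ∘ ψ := funext fun i => hglead _
  have hinj : Injective fun i => τ.leadExp (g (ψ i)) :=
    hlead ▸ Subtype.val_injective.comp ψ.injective
  have hrange : range (fun i => τ.leadExp (g (ψ i))) = τ.leadExps W := by
    rw [hlead, range_comp, ψ.range_eq_univ, image_univ, Subtype.range_coe]
  have hli := τ.linearIndependent_of_injective_leadExp (fun i => hg0 (ψ i)) hinj
  refine ⟨fun i => g (ψ i), fun i => hgW _, hli, ?_, ?_, ?_, fun i => hglead _⟩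
  · refine Submodule.eq_of_le_of_finrank_eq
      (Submodule.span_le.mpr (range_subset_iff.mpr fun i => hgW _)) ?_
    rw [finrank_span_eq_card hli, ← τ.ncard_leadExps W, ← hrange, ncard_range_of_injective hinj,
      Nat.card_eq_fintype_card]
  · refine τ.linearIndependent_of_injective_leadExp (fun i => initialTerm_ne_zero (hg0 _)) ?_
    simpa only [leadExp_initialTerm (hg0 _)] using hinj
  · rw [τ.span_initialTerm fun i => hg0 _, hrange]

end TermOrder

theorem ncard_sep_leadExps_le (τ₁ τ₂ : TermOrder n) (W : Submodule k (MvPolynomial (Fin n) k))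
    [FiniteDimensional k W] (β : Fin n →₀ ℕ) :
    {α ∈ τ₁.leadExps W | α = β ∨ τ₁.lt α β}.ncard ≤
      {α ∈ τ₂.leadExps W | α = β ∨ τ₁.lt α β}.ncard := by
  let U := W ⊓ restrictSupport k {α | α = β ∨ τ₁.lt α β}
  have hU : ∀ τ : TermOrder n, τ.leadExps U ⊆ {α ∈ τ.leadExps W | α = β ∨ τ₁.lt α β} := by
    rintro τ _ ⟨f, hf, hf0, rfl⟩
    exact ⟨⟨f, hf.1, hf0, rfl⟩, hf.2 (TermOrder.leadExp_mem_support hf0)⟩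
  have hU₁ : {α ∈ τ₁.leadExps W | α = β ∨ τ₁.lt α β} ⊆ τ₁.leadExps U := by
    rintro _ ⟨⟨f, hf, hf0, rfl⟩, hle⟩
    refine ⟨f, ⟨hf, fun γ hγ => ?_⟩, hf0, rfl⟩
    exact τ₁.eq_or_lt_trans (TermOrder.eq_or_lt_leadExp hγ) hle
  calc {α ∈ τ₁.leadExps W | α = β ∨ τ₁.lt α β}.ncard = (τ₁.leadExps U).ncard := by
        rw [(hU τ₁).antisymm hU₁]
    _ = (τ₂.leadExps U).ncard := by rw [TermOrder.ncard_leadExps, TermOrder.ncard_leadExps]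
    _ ≤ _ := ncard_le_ncard (hU τ₂) ((τ₂.finite_leadExps W).subset (sep_subset _ _))

theorem exists_equiv_leadExps_not_lt (τ₁ τ₂ : TermOrder n)
    (W : Submodule k (MvPolynomial (Fin n) k)) [FiniteDimensional k W] :
    ∃ σ : τ₁.leadExps W ≃ τ₂.leadExps W, ∀ α : τ₁.leadExps W, ¬ τ₁.lt α (σ α) := by
  obtain ⟨σ, hσ⟩ := @exists_equiv_le_of_ncard_sep_le _ τ₁.toLinearOrder _ _
    (τ₁.finite_leadExps W) (τ₂.finite_leadExps W)
    (by rw [τ₁.ncard_leadExps, τ₂.ncard_leadExps]) (ncard_sep_leadExps_le τ₁ τ₂ W)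
  exact ⟨σ, fun α => @not_lt_of_ge _ τ₁.toLinearOrder.toPreorder _ _ (hσ α)⟩

section Grading

variable {A : Type*} {𝒜 : (Fin n →₀ ℕ) → A} {a : A} {f : MvPolynomial (Fin n) k}

theorem gradedPiece_eq_restrictSupport (𝒜 : (Fin n →₀ ℕ) → A) (a : A) :
    gradedPiece (k := k) 𝒜 a = restrictSupport k {b | 𝒜 b = a} :=
  rfl

open Classical in
/-- Built like `MvPolynomial.weightedHomogeneousComponent`, which needs `𝒜` to come from
weights. -/
noncomputable def gradedComponent (𝒜 : (Fin n →₀ ℕ) → A) (a : A) :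
    MvPolynomial (Fin n) k →ₗ[k] MvPolynomial (Fin n) k :=
  (AddMonoidAlgebra.coeffLinearEquiv _).symm.toLinearMap ∘ₗ Submodule.subtype _ ∘ₗ
    Finsupp.restrictDom _ _ {d | 𝒜 d = a} ∘ₗ (AddMonoidAlgebra.coeffLinearEquiv _).toLinearMap

theorem coeff_gradedComponent [DecidableEq A] (d : Fin n →₀ ℕ) :
    coeff d (gradedComponent 𝒜 a f) = if 𝒜 d = a then coeff d f else 0 := by
  simp [gradedComponent, MvPolynomial, coeff, Finsupp.filter_apply]

theorem support_gradedComponent_subset : (gradedComponent 𝒜 a f).support ⊆ f.support := by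
  classical
  intro d hd
  rw [mem_support_iff, coeff_gradedComponent] at hd
  exact mem_support_iff.mpr fun h => hd (by simp [h])

theorem gradedComponent_mem_gradedPiece : gradedComponent 𝒜 a f ∈ gradedPiece 𝒜 a := by
  classical
  intro d hd
  rw [mem_support_iff, coeff_gradedComponent] at hd
  exact of_not_not fun h => hd (if_neg h)

theorem gradedComponent_of_mem_gradedPiece (hf : f ∈ gradedPiece 𝒜 a) :
    gradedComponent 𝒜 a f = f := by
  classical
  ext d
  rw [coeff_gradedComponent, ite_eq_left_iff]
  exact fun h => (notMem_support_iff.mp fun hd => h (hf d hd)).symm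

theorem gradedComponent_of_mem_gradedPiece_of_ne {a' : A} (hf : f ∈ gradedPiece 𝒜 a')
    (h : a' ≠ a) : gradedComponent 𝒜 a f = 0 := by
  classical
  ext d
  rw [coeff_gradedComponent, coeff_zero, ite_eq_right_iff]
  exact fun hd => notMem_support_iff.mp fun hd' => h (hf d hd' ▸ hd)

theorem finiteDimensional_gradedPiece (hfib : {b | 𝒜 b = a}.Finite) :
    FiniteDimensional k (gradedPiece (k := k) 𝒜 a) := by
  have := hfib.to_subtype
  rw [gradedPiece_eq_restrictSupport]
  exact .of_basis (basisRestrictSupport k _)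

variable [AddCommMonoid A]

theorem monomial_mul_mem_gradedPiece (hadd : ∀ x y, 𝒜 (x + y) = 𝒜 x + 𝒜 y)
    (hf : f ∈ gradedPiece 𝒜 a) (γ : Fin n →₀ ℕ) (c : k) :
    monomial γ c * f ∈ gradedPiece 𝒜 (𝒜 γ + a) := by
  intro d hd
  rw [mem_support_iff, coeff_monomial_mul'] at hd
  split_ifs at hd with hγd
  · obtain ⟨δ, rfl⟩ := exists_add_of_le hγd
    rw [add_tsub_cancel_left] at hd
    rw [hadd, hf δ (mem_support_iff.mpr (right_ne_zero_of_mul hd))]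
  · exact absurd rfl hd

/-- As a `k`-space, `I` is spanned by the monomial multiples of its homogeneous generators, and
`gradedComponent 𝒜 a` keeps or kills each of them. -/
theorem gradedComponent_mem (hadd : ∀ x y, 𝒜 (x + y) = 𝒜 x + 𝒜 y)
    {I : Ideal (MvPolynomial (Fin n) k)} (hI : IsHomogeneousIdeal 𝒜 I) (a : A) (hf : f ∈ I) :
    gradedComponent 𝒜 a f ∈ I := by
  obtain ⟨S, rfl, hS⟩ := hI
  have hmon : Submodule.span k (range fun γ : Fin n →₀ ℕ => monomial γ (1 : k)) = ⊤ := by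
    simpa using (basisMonomials (Fin n) k).span_eq
  rw [← Submodule.restrictScalars_mem k, Ideal.span, ← Submodule.span_smul_of_span_eq_top hmon]
    at hf
  refine Submodule.span_le (p := (Submodule.restrictScalars k (Ideal.span S)).comap
    (gradedComponent 𝒜 a)).mpr ?_ hf
  rintro _ ⟨_, ⟨γ, rfl⟩, s, hs, rfl⟩
  obtain ⟨a', ha'⟩ := hS s hs
  have hγs := monomial_mul_mem_gradedPiece hadd ha' γ 1
  change gradedComponent 𝒜 a (monomial γ 1 * s) ∈ Ideal.span S
  by_cases h : 𝒜 γ + a' = a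
  · rw [h] at hγs
    rw [gradedComponent_of_mem_gradedPiece hγs]
    exact Ideal.mul_mem_left _ _ (Ideal.subset_span hs)
  · rw [gradedComponent_of_mem_gradedPiece_of_ne hγs h]
    exact zero_mem _

end Grading

namespace TermOrder

variable (τ : TermOrder n) {A : Type*} [AddCommMonoid A] {𝒜 : (Fin n →₀ ℕ) → A}

theorem initialIdeal_eq_span_monomial (I : Ideal (MvPolynomial (Fin n) k)) :
    τ.initialIdeal I =
      Ideal.span ((monomial · 1) '' τ.leadExps (Submodule.restrictScalars k I)) := by
  apply le_antisymm <;> rw [initialIdeal, Ideal.span_le]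
  · rintro _ ⟨f, hf, hf0, rfl⟩
    rw [SetLike.mem_coe, initialTerm_eq_smul]
    exact Submodule.smul_of_tower_mem _ _ (Ideal.subset_span ⟨_, ⟨f, hf, hf0, rfl⟩, rfl⟩)
  · rintro _ ⟨_, ⟨f, hf, hf0, rfl⟩, rfl⟩
    dsimp only
    rw [SetLike.mem_coe, ← inv_smul_smul₀ (coeff_leadExp_ne_zero (τ := τ) hf0)
      (monomial (τ.leadExp f) (1 : k)), ← initialTerm_eq_smul]
    exact Submodule.smul_of_tower_mem _ _ (Ideal.subset_span ⟨f, hf, hf0, rfl⟩)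

/-- If `ξ` is divisible by the lead exponent of `f ∈ I`, say `ξ = α + γ`, then `ξ` is the lead
exponent of the degree-`a` component of `x^γ f`. -/
theorem mem_leadExps_of_mem_support (hadd : ∀ x y, 𝒜 (x + y) = 𝒜 x + 𝒜 y)
    {I : Ideal (MvPolynomial (Fin n) k)} (hI : IsHomogeneousIdeal 𝒜 I) {a : A}
    {p : MvPolynomial (Fin n) k} (hp : p ∈ τ.initialIdeal I) (hpa : p ∈ gradedPiece 𝒜 a)
    {ξ : Fin n →₀ ℕ} (hξ : ξ ∈ p.support) :
    ξ ∈ τ.leadExps (Submodule.restrictScalars k I ⊓ gradedPiece 𝒜 a) := by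
  classical
  rw [initialIdeal_eq_span_monomial, mem_ideal_span_monomial_image] at hp
  obtain ⟨_, ⟨f, hf, hf0, rfl⟩, hle⟩ := hp ξ hξ
  obtain ⟨γ, rfl⟩ := exists_add_of_le hle
  have hγf : monomial γ (1 : k) * f ≠ 0 :=
    mul_ne_zero (by rw [Ne, monomial_eq_zero]; exact one_ne_zero) hf0
  have hlead : τ.leadExp (monomial γ (1 : k) * f) = τ.leadExp f + γ := by
    rw [leadExp_monomial_mul γ hf0, add_comm]
  have hmem : τ.leadExp (monomial γ 1 * f) ∈
      (gradedComponent 𝒜 a (monomial γ 1 * f)).support := by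
    rw [mem_support_iff, coeff_gradedComponent, hlead, if_pos (hpa _ hξ), ← hlead]
    exact coeff_leadExp_ne_zero hγf
  refine ⟨_, ⟨gradedComponent_mem hadd hI a (I.mul_mem_left _ hf),
    gradedComponent_mem_gradedPiece⟩, support_nonempty.mp ⟨_, hmem⟩, ?_⟩
  rw [leadExp_eq_of_support_subset support_gradedComponent_subset hmem, hlead]

theorem initialIdeal_inf_gradedPiece (hadd : ∀ x y, 𝒜 (x + y) = 𝒜 x + 𝒜 y)
    {I : Ideal (MvPolynomial (Fin n) k)} (hI : IsHomogeneousIdeal 𝒜 I) (a : A) :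
    Submodule.restrictScalars k (τ.initialIdeal I) ⊓ gradedPiece 𝒜 a =
      Submodule.span k
        ((monomial · 1) '' τ.leadExps (Submodule.restrictScalars k I ⊓ gradedPiece 𝒜 a)) := by
  apply le_antisymm
  · rintro p ⟨hp, hpa⟩
    rw [p.as_sum]
    refine Submodule.sum_mem _ fun ξ hξ => ?_
    rw [← mul_one (coeff ξ p), ← smul_eq_mul, ← smul_monomial]
    exact Submodule.smul_mem _ _
      (Submodule.subset_span ⟨ξ, τ.mem_leadExps_of_mem_support hadd hI hp hpa hξ, rfl⟩)
  · rw [Submodule.span_le]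
    rintro _ ⟨_, ⟨g, ⟨hgI, hga⟩, hg0, rfl⟩, rfl⟩
    refine ⟨?_, ?_⟩
    · rw [SetLike.mem_coe, Submodule.restrictScalars_mem, initialIdeal_eq_span_monomial]
      exact Ideal.subset_span ⟨_, ⟨g, hgI, hg0, rfl⟩, rfl⟩
    · rw [SetLike.mem_coe, gradedPiece_eq_restrictSupport, monomial_mem_restrictSupport]
      exact Or.inl (hga _ (leadExp_mem_support hg0))

end TermOrder

theorem exists_basis_initialTerms_le_general {A : Type*} [AddCommMonoid A]
    (𝒜 : (Fin n →₀ ℕ) → A) (hadd : ∀ x y, 𝒜 (x + y) = 𝒜 x + 𝒜 y)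
    (hfib : ∀ a : A, {b : Fin n →₀ ℕ | 𝒜 b = a}.Finite)
    (I : Ideal (MvPolynomial (Fin n) k)) (hI : IsHomogeneousIdeal 𝒜 I)
    (τ₁ τ₂ : TermOrder n) (a : A) (s : ℕ)
    (f₁ : Fin s → MvPolynomial (Fin n) k)
    (hspan₁ : Submodule.span k (Set.range f₁) =
      Submodule.restrictScalars k I ⊓ gradedPiece (k := k) 𝒜 a)
    (hliIn₁ : LinearIndependent k (fun i => τ₁.initialTerm (f₁ i))) :
    ∃ f₂ : Fin s → MvPolynomial (Fin n) k,
      (∀ i, f₂ i ∈ Submodule.restrictScalars k I ⊓ gradedPiece (k := k) 𝒜 a) ∧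
      LinearIndependent k f₂ ∧
      Submodule.span k (Set.range f₂) =
        Submodule.restrictScalars k I ⊓ gradedPiece (k := k) 𝒜 a ∧
      LinearIndependent k (fun i => τ₂.initialTerm (f₂ i)) ∧
      Submodule.span k (Set.range fun i => τ₂.initialTerm (f₂ i)) =
        Submodule.restrictScalars k (τ₂.initialIdeal I) ⊓ gradedPiece (k := k) 𝒜 a ∧
      ∀ i, ¬ τ₁.lt (τ₁.leadExp (f₁ i)) (τ₂.leadExp (f₂ i)) := by
  set V := Submodule.restrictScalars k I ⊓ gradedPiece (k := k) 𝒜 a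
  have := finiteDimensional_gradedPiece (k := k) (hfib a)
  have : FiniteDimensional k V := Submodule.finiteDimensional_of_le inf_le_right
  have hinj₁ := τ₁.injective_leadExp_of_linearIndependent hliIn₁
  obtain ⟨σ, hσ⟩ := exists_equiv_leadExps_not_lt τ₁ τ₂ V
  have hrange₁ := τ₁.range_leadExp_eq_leadExps V hspan₁ hliIn₁
  let ψ : Fin s ≃ τ₂.leadExps V :=
    (Equiv.ofInjective _ hinj₁).trans ((Equiv.setCongr hrange₁).trans σ)
  obtain ⟨f₂, hf₂V, hli₂, hspan₂, hliIn₂, hspanIn₂, hlead₂⟩ := τ₂.exists_basis_leadExp_eq V ψ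
  refine ⟨f₂, hf₂V, hli₂, hspan₂, hliIn₂, ?_, fun i => ?_⟩
  · rw [hspanIn₂, τ₂.initialIdeal_inf_gradedPiece hadd hI]
  · rw [hlead₂]
    exact hσ ⟨_, hrange₁ ▸ mem_range_self i⟩

/-- Lemma 4.1 of Lauritzen: given two term orders `≤₁`, `≤₂` and a basis of
`I_a` whose `≤₁`-initial terms form a basis of `(in_{≤₁}(I))_a`, there is a
basis of `I_a` whose `≤₂`-initial terms form a basis of `(in_{≤₂}(I))_a` and
whose `≤₂`-initial terms are `≤₁`-bounded by the respective `≤₁`-initial terms. -/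
theorem exists_basis_initialTerms_le {A : Type*} [AddCommMonoid A]
    (𝒜 : (Fin n →₀ ℕ) → A) (hadd : ∀ x y, 𝒜 (x + y) = 𝒜 x + 𝒜 y)
    (hfib : ∀ a : A, {b : Fin n →₀ ℕ | 𝒜 b = a}.Finite)
    (I : Ideal (MvPolynomial (Fin n) k)) (hI : IsHomogeneousIdeal 𝒜 I)
    (τ₁ τ₂ : TermOrder n) (a : A) (s : ℕ)
    (f₁ : Fin s → MvPolynomial (Fin n) k)
    (hmem₁ : ∀ i, f₁ i ∈ Submodule.restrictScalars k I ⊓ gradedPiece (k := k) 𝒜 a)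
    (hli₁ : LinearIndependent k f₁)
    (hspan₁ : Submodule.span k (Set.range f₁) =
      Submodule.restrictScalars k I ⊓ gradedPiece (k := k) 𝒜 a)
    (hliIn₁ : LinearIndependent k (fun i => τ₁.initialTerm (f₁ i)))
    (hspanIn₁ : Submodule.span k (Set.range fun i => τ₁.initialTerm (f₁ i)) =
      Submodule.restrictScalars k (τ₁.initialIdeal I) ⊓ gradedPiece (k := k) 𝒜 a) :
    ∃ f₂ : Fin s → MvPolynomial (Fin n) k,
      (∀ i, f₂ i ∈ Submodule.restrictScalars k I ⊓ gradedPiece (k := k) 𝒜 a) ∧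
      LinearIndependent k f₂ ∧
      Submodule.span k (Set.range f₂) =
        Submodule.restrictScalars k I ⊓ gradedPiece (k := k) 𝒜 a ∧
      LinearIndependent k (fun i => τ₂.initialTerm (f₂ i)) ∧
      Submodule.span k (Set.range fun i => τ₂.initialTerm (f₂ i)) =
        Submodule.restrictScalars k (τ₂.initialIdeal I) ⊓ gradedPiece (k := k) 𝒜 a ∧
      ∀ i, ¬ τ₁.lt (τ₁.leadExp (f₁ i)) (τ₂.leadExp (f₂ i)) :=
  exists_basis_initialTerms_le_general 𝒜 hadd hfib I hI τ₁ τ₂ a s f₁ hspan₁ hliIn₁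
end

section
/- Let (A, 𝒜) be a grading on R = k[x_1,…,x_n], let I ⊆ R be an 𝒜-homogeneous ideal, and let ≺ be a term order. Then I and in_≺(I) have the same 𝒜-graded Hilbert function: for every a ∈ A, dim_k(R_a / I_a) = dim_k(R_a / (in_≺(I))_a). -/
open MvPolynomial

variable {n : ℕ} {k : Type*} [Field k]

section Aux

open MvPolynomial Finset

variable {n : ℕ} {k : Type*} [Field k]

/-- A finite nonempty set of exponents has a τ-maximum. -/
lemma TermOrder.finset_max (τ : TermOrder n) (s : Finset (Fin n →₀ ℕ)) (hs : s.Nonempty) :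
    ∃ α ∈ s, ∀ β ∈ s, β ≠ α → τ.lt β α := by
  classical
  induction s using Finset.induction_on with
  | empty => exact absurd hs (by simp)
  | @insert a s ha ih =>
    rcases s.eq_empty_or_nonempty with rfl | hne
    · exact ⟨a, by simp, by simp⟩
    · obtain ⟨α, hαs, hmax⟩ := ih hne
      have haα : a ≠ α := fun h => ha (h ▸ hαs)
      rcases τ.total a α haα with h | h
      · exact ⟨α, Finset.mem_insert_of_mem hαs, by
          intro β hβ hβα
          rcases Finset.mem_insert.mp hβ with rfl | hβs
          · exact h
          · exact hmax β hβs hβα⟩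
      · refine ⟨a, Finset.mem_insert_self _ _, ?_⟩
        intro β hβ hβa
        rcases Finset.mem_insert.mp hβ with rfl | hβs
        · exact absurd rfl hβa
        · rcases eq_or_ne β α with rfl | hβα
          · exact h
          · exact τ.trans _ _ _ (hmax β hβs hβα) h

lemma TermOrder.leadExp_spec_s16 (τ : TermOrder n) {f : MvPolynomial (Fin n) k} (hf : f ≠ 0) :
    τ.leadExp f ∈ f.support ∧ ∀ β ∈ f.support, β ≠ τ.leadExp f → τ.lt β (τ.leadExp f) := by
  have hex : ∃ α, α ∈ f.support ∧ ∀ β ∈ f.support, β ≠ α → τ.lt β α := by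
    obtain ⟨α, h1, h2⟩ := τ.finset_max f.support (support_nonempty.mpr hf)
    exact ⟨α, h1, h2⟩
  rw [TermOrder.leadExp, dif_pos hex]
  exact hex.choose_spec

lemma TermOrder.leadExp_mem (τ : TermOrder n) {f : MvPolynomial (Fin n) k} (hf : f ≠ 0) :
    τ.leadExp f ∈ f.support := (τ.leadExp_spec_s16 hf).1

lemma TermOrder.lt_leadExp (τ : TermOrder n) {f : MvPolynomial (Fin n) k} (hf : f ≠ 0)
    {β} (hβ : β ∈ f.support) (hne : β ≠ τ.leadExp f) : τ.lt β (τ.leadExp f) :=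
  (τ.leadExp_spec_s16 hf).2 β hβ hne

lemma TermOrder.leadExp_unique (τ : TermOrder n) {f : MvPolynomial (Fin n) k} {α}
    (h1 : α ∈ f.support) (h2 : ∀ β ∈ f.support, β ≠ α → τ.lt β α) : τ.leadExp f = α := by
  have hf : f ≠ 0 := by
    intro h; subst h; simp at h1
  by_contra hne
  exact τ.irrefl _ (τ.trans _ _ _ (τ.lt_leadExp hf h1 (fun h => hne h.symm))
    (h2 _ (τ.leadExp_mem hf) hne))

lemma TermOrder.leadCoeff_ne_zero (τ : TermOrder n) {f : MvPolynomial (Fin n) k} (hf : f ≠ 0) :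
    f.coeff (τ.leadExp f) ≠ 0 := by
  simpa [MvPolynomial.mem_support_iff] using τ.leadExp_mem hf

end Aux

section Aux2

open MvPolynomial Finset

variable {n : ℕ} {k : Type*} [Field k] {A : Type*}

/-- The `𝒜`-homogeneous component of degree `a` of a polynomial. -/
noncomputable def hcomp (𝒜 : (Fin n →₀ ℕ) → A) (a : A) (f : MvPolynomial (Fin n) k) :
    MvPolynomial (Fin n) k :=
  letI := Classical.decPred fun β : Fin n →₀ ℕ => 𝒜 β = a
  ∑ β ∈ f.support.filter (fun β => 𝒜 β = a), monomial β (f.coeff β)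

lemma coeff_hcomp (𝒜 : (Fin n →₀ ℕ) → A) (a : A) (f : MvPolynomial (Fin n) k)
    (β : Fin n →₀ ℕ) :
    letI := Classical.decPred fun β : Fin n →₀ ℕ => 𝒜 β = a
    (hcomp 𝒜 a f).coeff β = if 𝒜 β = a then f.coeff β else 0 := by
  classical
  rw [hcomp, coeff_sum]
  simp only [coeff_monomial]
  rw [Finset.sum_ite_eq' (f.support.filter (fun β => 𝒜 β = a)) β (fun γ => f.coeff γ)]
  by_cases h1 : 𝒜 β = a
  · by_cases h2 : β ∈ f.support
    · simp [h1, h2]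
    · simp only [MvPolynomial.mem_support_iff, not_not] at h2
      simp [h1, h2]
  · simp [h1]

lemma hcomp_mem_gradedPiece (𝒜 : (Fin n →₀ ℕ) → A) (a : A) (f : MvPolynomial (Fin n) k) :
    hcomp 𝒜 a f ∈ gradedPiece (k := k) 𝒜 a := by
  classical
  intro β hβ
  rw [MvPolynomial.mem_support_iff, coeff_hcomp] at hβ
  by_contra h
  simp [h] at hβ

lemma hcomp_eq_self {𝒜 : (Fin n →₀ ℕ) → A} {a : A} {f : MvPolynomial (Fin n) k}
    (h : ∀ b ∈ f.support, 𝒜 b = a) : hcomp 𝒜 a f = f := by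
  classical
  ext β
  rw [coeff_hcomp]
  by_cases hβ : β ∈ f.support
  · simp [h β hβ]
  · simp only [MvPolynomial.mem_support_iff, not_not] at hβ
    simp [hβ]

lemma hcomp_eq_zero {𝒜 : (Fin n →₀ ℕ) → A} {a c : A} {f : MvPolynomial (Fin n) k}
    (h : ∀ b ∈ f.support, 𝒜 b = c) (hca : c ≠ a) : hcomp 𝒜 a f = 0 := by
  classical
  ext β
  rw [coeff_hcomp]
  by_cases hβ : β ∈ f.support
  · rw [if_neg (by rw [h β hβ]; exact hca)]
    simp
  · simp only [MvPolynomial.mem_support_iff, not_not] at hβ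
    simp [hβ]

lemma hcomp_zero (𝒜 : (Fin n →₀ ℕ) → A) (a : A) :
    hcomp 𝒜 a (0 : MvPolynomial (Fin n) k) = 0 := by
  classical
  ext β
  rw [coeff_hcomp]
  simp

lemma hcomp_add (𝒜 : (Fin n →₀ ℕ) → A) (a : A) (f g : MvPolynomial (Fin n) k) :
    hcomp 𝒜 a (f + g) = hcomp 𝒜 a f + hcomp 𝒜 a g := by
  classical
  ext β
  simp only [MvPolynomial.coeff_add, coeff_hcomp]
  split <;> simp

/-- Decomposition of a polynomial into homogeneous components. -/
lemma hcomp_decompose [DecidableEq A] (𝒜 : (Fin n →₀ ℕ) → A) (f : MvPolynomial (Fin n) k) :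
    f = ∑ a ∈ f.support.image 𝒜, hcomp 𝒜 a f := by
  classical
  ext β
  rw [coeff_sum]
  simp only [coeff_hcomp]
  by_cases hβ : β ∈ f.support
  · rw [Finset.sum_eq_single (𝒜 β)]
    · simp
    · intro b _ hb
      rw [if_neg (fun h => hb h.symm)]
    · intro h
      exact absurd (Finset.mem_image_of_mem 𝒜 hβ) h
  · simp only [MvPolynomial.mem_support_iff, not_not] at hβ
    rw [hβ, Finset.sum_eq_zero]
    intro b _
    split <;> simp [hβ]

lemma hom_mul [AddCommMonoid A] {𝒜 : (Fin n →₀ ℕ) → A}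
    (hadd : ∀ x y, 𝒜 (x + y) = 𝒜 x + 𝒜 y) {c d : A} {p q : MvPolynomial (Fin n) k}
    (hp : ∀ b ∈ p.support, 𝒜 b = c) (hq : ∀ b ∈ q.support, 𝒜 b = d) :
    ∀ b ∈ (p * q).support, 𝒜 b = c + d := by
  classical
  intro b hb
  have := MvPolynomial.support_mul p q hb
  rw [Finset.mem_add] at this
  obtain ⟨γ, hγ, δ, hδ, rfl⟩ := this
  rw [hadd, hp γ hγ, hq δ hδ]

/-- Homogeneous components of elements of a homogeneous ideal lie in the ideal. -/
lemma hcomp_mem_of_mem [AddCommMonoid A] {𝒜 : (Fin n →₀ ℕ) → A}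
    (hadd : ∀ x y, 𝒜 (x + y) = 𝒜 x + 𝒜 y) {I : Ideal (MvPolynomial (Fin n) k)}
    (hI : IsHomogeneousIdeal 𝒜 I) {f : MvPolynomial (Fin n) k} (hf : f ∈ I) (a : A) :
    hcomp 𝒜 a f ∈ I := by
  classical
  obtain ⟨S, rfl, hS⟩ := hI
  refine Submodule.span_induction (p := fun f _ => ∀ a : A, hcomp 𝒜 a f ∈ Ideal.span S)
    ?_ ?_ ?_ ?_ hf a
  · intro s hs a
    obtain ⟨b, hb⟩ := hS s hs
    rcases eq_or_ne b a with rfl | hba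
    · rw [hcomp_eq_self hb]; exact Ideal.subset_span hs
    · rw [hcomp_eq_zero hb hba]; exact Submodule.zero_mem _
  · intro a
    rw [hcomp_zero]; exact Submodule.zero_mem _
  · intro x y _ _ hx hy a
    rw [hcomp_add]
    exact Submodule.add_mem _ (hx a) (hy a)
  · intro r x _ hx a
    have hsum : ∀ (s : Finset (A × A)) (g : A × A → MvPolynomial (Fin n) k),
        hcomp 𝒜 a (∑ p ∈ s, g p) = ∑ p ∈ s, hcomp 𝒜 a (g p) := by
      intro s g
      induction s using Finset.induction_on with
      | empty => simpa using hcomp_zero 𝒜 a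
      | @insert p s hp ih =>
        rw [Finset.sum_insert hp, Finset.sum_insert hp, hcomp_add, ih]
    have key : r • x = ∑ p ∈ (r.support.image 𝒜) ×ˢ (x.support.image 𝒜),
        hcomp 𝒜 p.1 r * hcomp 𝒜 p.2 x := by
      rw [Finset.sum_product]
      dsimp only
      rw [← Finset.sum_mul_sum]
      rw [← hcomp_decompose, ← hcomp_decompose]
      rfl
    rw [key, hsum]
    refine Submodule.sum_mem _ ?_
    rintro ⟨c, b⟩ _
    have hhom : ∀ β ∈ (hcomp 𝒜 c r * hcomp 𝒜 b x).support, 𝒜 β = c + b :=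
      hom_mul hadd (hcomp_mem_gradedPiece 𝒜 c r) (hcomp_mem_gradedPiece 𝒜 b x)
    rcases eq_or_ne (c + b) a with h | h
    · rw [hcomp_eq_self (h ▸ hhom)]
      exact Ideal.mul_mem_left _ _ (hx b)
    · rw [hcomp_eq_zero hhom h]
      exact Submodule.zero_mem _

end Aux2

section Aux3

open MvPolynomial Finset Submodule

variable {n : ℕ} {k : Type*} [Field k]

lemma TermOrder.leadExp_monomial (τ : TermOrder n) {α : Fin n →₀ ℕ} {c : k} (hc : c ≠ 0) :
    τ.leadExp (monomial α c) = α := by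
  classical
  apply τ.leadExp_unique
  · simp [MvPolynomial.support_monomial, hc]
  · intro β hβ hne
    simp [MvPolynomial.support_monomial, hc] at hβ
    exact absurd hβ hne

lemma mem_support_monomial_mul {f : MvPolynomial (Fin n) k} {γ β : Fin n →₀ ℕ} :
    β ∈ (monomial γ (1:k) * f).support ↔ ∃ δ ∈ f.support, β = γ + δ := by
  classical
  constructor
  · intro hβ
    have h := MvPolynomial.support_mul (monomial γ (1:k)) f hβ
    rw [Finset.mem_add] at h
    obtain ⟨γ', hγ', δ, hδ, rfl⟩ := h
    have : γ' = γ := by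
      simpa [MvPolynomial.support_monomial] using hγ'
    exact ⟨δ, hδ, by rw [this]⟩
  · rintro ⟨δ, hδ, rfl⟩
    rw [MvPolynomial.mem_support_iff, MvPolynomial.coeff_monomial_mul, one_mul]
    exact MvPolynomial.mem_support_iff.mp hδ

lemma TermOrder.leadExp_monomial_mul_s16 (τ : TermOrder n) {f : MvPolynomial (Fin n) k}
    (hf : f ≠ 0) (γ : Fin n →₀ ℕ) :
    τ.leadExp (monomial γ (1:k) * f) = γ + τ.leadExp f := by
  apply τ.leadExp_unique
  · exact mem_support_monomial_mul.mpr ⟨τ.leadExp f, τ.leadExp_mem hf, rfl⟩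
  · intro β hβ hne
    obtain ⟨δ, hδ, rfl⟩ := mem_support_monomial_mul.mp hβ
    have hδne : δ ≠ τ.leadExp f := fun h => hne (by rw [h])
    have := τ.add_right _ _ γ (τ.lt_leadExp hf hδ hδne)
    rwa [add_comm δ γ, add_comm (τ.leadExp f) γ] at this

/-- The set of leading exponents of nonzero elements of a subspace. -/
def leadSet (τ : TermOrder n) (V : Submodule k (MvPolynomial (Fin n) k)) :
    Set (Fin n →₀ ℕ) :=
  {α | ∃ f, f ∈ V ∧ f ≠ 0 ∧ τ.leadExp f = α}

/-- Macaulay: the dimension of a graded subspace equals the number of its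
leading exponents. -/
lemma finrank_eq_card_leadSet (τ : TermOrder n) {A : Type*} {𝒜 : (Fin n →₀ ℕ) → A} {a : A}
    (hfib : {b : Fin n →₀ ℕ | 𝒜 b = a}.Finite) (V : Submodule k (MvPolynomial (Fin n) k))
    (hV : V ≤ gradedPiece (k := k) 𝒜 a) (hfin : (leadSet τ V).Finite) :
    Module.finrank k V = hfin.toFinset.card := by
  classical
  set F : Finset (Fin n →₀ ℕ) := hfib.toFinset with hF
  set S : Finset (Fin n →₀ ℕ) := hfin.toFinset with hS
  have hsel : ∀ α : {x // x ∈ S}, ∃ f, f ∈ V ∧ f ≠ 0 ∧ τ.leadExp f = α.1 :=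
    fun α => hfin.mem_toFinset.mp α.2
  choose f' hmem hne0 hlead using hsel
  -- linear independence
  have hind : LinearIndependent k f' := by
    rw [Fintype.linearIndependent_iff]
    intro g hg
    by_contra hc
    push_neg at hc
    obtain ⟨i0, hi0⟩ := hc
    set T : Finset (Fin n →₀ ℕ) :=
      (Finset.univ.filter (fun i : {x // x ∈ S} => g i ≠ 0)).image Subtype.val with hT
    have hTne : T.Nonempty := ⟨i0.1, Finset.mem_image_of_mem _ (by simp [hi0])⟩
    obtain ⟨α, hαT, hαmax⟩ := τ.finset_max T hTne
    obtain ⟨i, hi, hival⟩ : ∃ i : {x // x ∈ S}, g i ≠ 0 ∧ i.1 = α := by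
      obtain ⟨i, hi, h⟩ := Finset.mem_image.mp hαT
      exact ⟨i, (Finset.mem_filter.mp hi).2, h⟩
    have hco := congrArg (MvPolynomial.coeff α) hg
    rw [MvPolynomial.coeff_sum] at hco
    simp only [MvPolynomial.coeff_smul, smul_eq_mul, MvPolynomial.coeff_zero] at hco
    rw [Finset.sum_eq_single i] at hco
    · have : (f' i).coeff α ≠ 0 := by
        rw [← hival, ← hlead i]
        exact τ.leadCoeff_ne_zero (hne0 i)
      exact this (by
        rcases mul_eq_zero.mp hco with h | h
        · exact absurd h hi
        · exact h)
    · intro j _ hji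
      rcases eq_or_ne (g j) 0 with h | h
      · rw [h, zero_mul]
      · have hjT : j.1 ∈ T := Finset.mem_image_of_mem _ (by simp [h])
        have hjα : j.1 ≠ α := by
          intro hh
          exact hji (Subtype.ext (by rw [hh, ← hival]))
        have h1 : τ.lt j.1 α := hαmax _ hjT hjα
        have : (f' j).coeff α = 0 := by
          by_contra hcα
          have hαs : α ∈ (f' j).support := MvPolynomial.mem_support_iff.mpr hcα
          have hαj : α ≠ τ.leadExp (f' j) := by rw [hlead j]; exact fun h => hjα h.symm
          have h2 := τ.lt_leadExp (hne0 j) hαs hαj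
          rw [hlead j] at h2
          exact τ.irrefl _ (τ.trans _ _ _ h1 h2)
        rw [this, mul_zero]
    · intro h
      exact absurd (Finset.mem_univ i) h
  -- spanning
  have hspan : ∀ g ∈ V, g ∈ Submodule.span k (Set.range f') := by
    have main : ∀ N : ℕ, ∀ g, g ∈ V →
        F.card - (F.filter (fun β => τ.lt (τ.leadExp g) β)).card ≤ N →
        g ∈ Submodule.span k (Set.range f') := by
      intro N
      induction N with
      | zero =>
        intro g hg hμ
        rcases eq_or_ne g 0 with rfl | hg0
        · exact Submodule.zero_mem _
        exfalso
        have hFg : τ.leadExp g ∈ F := hfib.mem_toFinset.mpr (hV hg _ (τ.leadExp_mem hg0))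
        have hnotU : τ.leadExp g ∉ F.filter (fun β => τ.lt (τ.leadExp g) β) := by
          simp only [Finset.mem_filter, not_and]
          exact fun _ => τ.irrefl _
        have hlt : (F.filter (fun β => τ.lt (τ.leadExp g) β)).card < F.card :=
          Finset.card_lt_card ⟨Finset.filter_subset _ _, fun hsub => hnotU (hsub hFg)⟩
        omega
      | succ N ih =>
        intro g hg hμ
        rcases eq_or_ne g 0 with rfl | hg0
        · exact Submodule.zero_mem _
        have hleadS : τ.leadExp g ∈ S := hfin.mem_toFinset.mpr ⟨g, hg, hg0, rfl⟩
        set i : {x // x ∈ S} := ⟨τ.leadExp g, hleadS⟩ with hidef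
        have hileq : τ.leadExp (f' i) = τ.leadExp g := hlead i
        set c : k := g.coeff (τ.leadExp g) / (f' i).coeff (τ.leadExp g) with hc
        set g' := g - c • f' i with hg'def
        have hg'V : g' ∈ V := sub_mem hg (Submodule.smul_mem _ _ (hmem i))
        have hfi_mem : f' i ∈ Submodule.span k (Set.range f') :=
          Submodule.subset_span ⟨i, rfl⟩
        have hgsum : g = g' + c • f' i := by rw [hg'def]; ring
        rcases eq_or_ne g' 0 with hg'0 | hg'0
        · rw [hgsum, hg'0, zero_add]
          exact Submodule.smul_mem _ _ hfi_mem
        have hlcfi : (f' i).coeff (τ.leadExp g) ≠ 0 := by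
          rw [← hileq]; exact τ.leadCoeff_ne_zero (hne0 i)
        have hco : g'.coeff (τ.leadExp g) = 0 := by
          rw [hg'def, MvPolynomial.coeff_sub, MvPolynomial.coeff_smul, smul_eq_mul, hc,
            div_mul_cancel₀ _ hlcfi, sub_self]
        have hlt : τ.lt (τ.leadExp g') (τ.leadExp g) := by
          have hsupp : τ.leadExp g' ∈ g'.support := τ.leadExp_mem hg'0
          have hnee : τ.leadExp g' ≠ τ.leadExp g := by
            intro h
            rw [MvPolynomial.mem_support_iff, h, hco] at hsupp
            exact hsupp rfl
          have hcases : τ.leadExp g' ∈ g.support ∨ τ.leadExp g' ∈ (f' i).support := by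
            have hcoe : g'.coeff (τ.leadExp g') ≠ 0 := MvPolynomial.mem_support_iff.mp hsupp
            by_contra hn
            push_neg at hn
            obtain ⟨h1, h2⟩ := hn
            rw [MvPolynomial.notMem_support_iff] at h1 h2
            rw [hg'def, MvPolynomial.coeff_sub, MvPolynomial.coeff_smul, h1, h2] at hcoe
            simp at hcoe
          rcases hcases with h | h
          · exact τ.lt_leadExp hg0 h hnee
          · have := τ.lt_leadExp (hne0 i) h (by rw [hileq]; exact hnee)
            rwa [hileq] at this
        -- measure decreases
        have hFg : τ.leadExp g ∈ F := hfib.mem_toFinset.mpr (hV hg _ (τ.leadExp_mem hg0))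
        have hUsub : F.filter (fun β => τ.lt (τ.leadExp g) β) ⊆
            F.filter (fun β => τ.lt (τ.leadExp g') β) := by
          intro β hβ
          rw [Finset.mem_filter] at hβ ⊢
          exact ⟨hβ.1, τ.trans _ _ _ hlt hβ.2⟩
        have hgmem' : τ.leadExp g ∈ F.filter (fun β => τ.lt (τ.leadExp g') β) :=
          Finset.mem_filter.mpr ⟨hFg, hlt⟩
        have hgnot : τ.leadExp g ∉ F.filter (fun β => τ.lt (τ.leadExp g) β) := by
          simp only [Finset.mem_filter, not_and]
          exact fun _ => τ.irrefl _
        have hcard : (F.filter (fun β => τ.lt (τ.leadExp g) β)).card <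
            (F.filter (fun β => τ.lt (τ.leadExp g') β)).card :=
          Finset.card_lt_card ⟨hUsub, fun hsub => hgnot (hsub hgmem')⟩
        have hcard2 : (F.filter (fun β => τ.lt (τ.leadExp g') β)).card ≤ F.card :=
          Finset.card_le_card (Finset.filter_subset _ _)
        have hcard3 : (F.filter (fun β => τ.lt (τ.leadExp g) β)).card < F.card :=
          lt_of_lt_of_le hcard hcard2
        have hrec : g' ∈ Submodule.span k (Set.range f') := ih g' hg'V (by omega)
        rw [hgsum]
        exact Submodule.add_mem _ hrec (Submodule.smul_mem _ _ hfi_mem)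
    intro g hg
    exact main F.card g hg (Nat.sub_le _ _)
  have hspaneq : Submodule.span k (Set.range f') = V := by
    apply le_antisymm
    · rw [Submodule.span_le]
      rintro _ ⟨i, rfl⟩
      exact hmem i
    · intro g hg
      exact hspan g hg
  rw [← hspaneq, finrank_span_eq_card hind, Fintype.card_coe]

end Aux3

section Aux4

open MvPolynomial Finset Submodule

variable {n : ℕ} {k : Type*} [Field k]

/-- Every exponent in the support of an element of the initial ideal is a shift
of a leading exponent of an element of `I`. -/
lemma exists_shift_of_mem_initialIdeal (τ : TermOrder n) {I : Ideal (MvPolynomial (Fin n) k)}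
    {g : MvPolynomial (Fin n) k} (hg : g ∈ τ.initialIdeal I) :
    ∀ α ∈ g.support, ∃ f γ, f ∈ I ∧ f ≠ 0 ∧ α = γ + τ.leadExp f := by
  classical
  refine Submodule.span_induction
    (p := fun g _ => ∀ α ∈ g.support, ∃ f γ, f ∈ I ∧ f ≠ 0 ∧ α = γ + τ.leadExp f)
    ?_ ?_ ?_ ?_ hg
  · rintro p ⟨f, hfI, hfne, rfl⟩ α hα
    rw [TermOrder.initialTerm] at hα
    have : α = τ.leadExp f := by
      have h2 : α ∈ ({τ.leadExp f} : Finset (Fin n →₀ ℕ)) := by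
        simpa [MvPolynomial.support_monomial, τ.leadCoeff_ne_zero hfne] using hα
      simpa using h2
    exact ⟨f, 0, hfI, hfne, by rw [this, zero_add]⟩
  · intro α hα
    simp at hα
  · intro x y _ _ hx hy α hα
    rcases Finset.mem_union.mp (MvPolynomial.support_add hα) with h | h
    · exact hx α h
    · exact hy α h
  · intro r x _ hx α hα
    have hmul : α ∈ (r * x).support := hα
    have h := MvPolynomial.support_mul r x hmul
    rw [Finset.mem_add] at h
    obtain ⟨γ', hγ', β, hβ, rfl⟩ := h
    obtain ⟨f, γ, hfI, hfne, rfl⟩ := hx β hβ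
    exact ⟨f, γ' + γ, hfI, hfne, by rw [add_assoc]⟩

lemma leadSet_initialIdeal_eq {A : Type*} [AddCommMonoid A]
    {𝒜 : (Fin n →₀ ℕ) → A} (hadd : ∀ x y, 𝒜 (x + y) = 𝒜 x + 𝒜 y)
    {I : Ideal (MvPolynomial (Fin n) k)} (hI : IsHomogeneousIdeal 𝒜 I)
    (τ : TermOrder n) (a : A) :
    leadSet τ (Submodule.restrictScalars k I ⊓ gradedPiece (k := k) 𝒜 a) =
    leadSet τ (Submodule.restrictScalars k (τ.initialIdeal I) ⊓ gradedPiece (k := k) 𝒜 a) := by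
  classical
  ext α
  constructor
  · rintro ⟨f, ⟨hfI, hfgp⟩, hfne, rfl⟩
    refine ⟨τ.initialTerm f, ⟨?_, ?_⟩, ?_, ?_⟩
    · exact Submodule.subset_span ⟨f, hfI, hfne, rfl⟩
    · intro β hβ
      rw [TermOrder.initialTerm] at hβ
      have : β = τ.leadExp f := by
        simpa [MvPolynomial.support_monomial, τ.leadCoeff_ne_zero hfne] using hβ
      rw [this]
      exact hfgp _ (τ.leadExp_mem hfne)
    · rw [TermOrder.initialTerm]
      simp [MvPolynomial.monomial_eq_zero, τ.leadCoeff_ne_zero hfne]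
    · rw [TermOrder.initialTerm, τ.leadExp_monomial (τ.leadCoeff_ne_zero hfne)]
  · rintro ⟨g, ⟨hgI, hggp⟩, hgne, rfl⟩
    have hαsupp : τ.leadExp g ∈ g.support := τ.leadExp_mem hgne
    obtain ⟨f, γ, hfI, hfne, hαeq⟩ := exists_shift_of_mem_initialIdeal τ hgI _ hαsupp
    have h𝒜α : 𝒜 (τ.leadExp g) = a := hggp _ hαsupp
    -- the shifted polynomial
    set h0 : MvPolynomial (Fin n) k := monomial γ (1 : k) * f with hh0
    have hh0I : h0 ∈ I := Ideal.mul_mem_left _ _ hfI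
    have hh0ne : h0 ≠ 0 := by
      rw [hh0]
      exact mul_ne_zero (by simp [MvPolynomial.monomial_eq_zero]) hfne
    have hh0lead : τ.leadExp h0 = τ.leadExp g := by
      rw [hh0, τ.leadExp_monomial_mul_s16 hfne, ← hαeq]
    -- its homogeneous component of degree a
    set h : MvPolynomial (Fin n) k := hcomp 𝒜 a h0 with hh
    have hhI : h ∈ I := hcomp_mem_of_mem hadd hI hh0I a
    have hhgp : h ∈ gradedPiece (k := k) 𝒜 a := hcomp_mem_gradedPiece 𝒜 a h0
    have hcoeffh : h.coeff (τ.leadExp g) = h0.coeff (τ.leadExp g) := by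
      rw [hh, coeff_hcomp, if_pos h𝒜α]
    have hαh : τ.leadExp g ∈ h.support := by
      rw [MvPolynomial.mem_support_iff, hcoeffh, ← hh0lead]
      exact τ.leadCoeff_ne_zero hh0ne
    have hhne : h ≠ 0 := fun hz => by simp [hz] at hαh
    have hsub : h.support ⊆ h0.support := by
      intro β hβ
      rw [MvPolynomial.mem_support_iff] at hβ ⊢
      rw [hh, coeff_hcomp] at hβ
      intro hz
      apply hβ
      split <;> simp [hz]
    have hhlead : τ.leadExp h = τ.leadExp g := by
      apply τ.leadExp_unique hαh
      intro β hβ hne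
      have := τ.lt_leadExp hh0ne (hsub hβ) (by rw [hh0lead]; exact hne)
      rwa [hh0lead] at this
    exact ⟨h, ⟨hhI, hhgp⟩, hhne, hhlead⟩

lemma gradedPiece_finiteDimensional {A : Type*} (𝒜 : (Fin n →₀ ℕ) → A) (a : A)
    (hfib : {b : Fin n →₀ ℕ | 𝒜 b = a}.Finite) :
    FiniteDimensional k ↥(gradedPiece (k := k) 𝒜 a) := by
  classical
  have hle : gradedPiece (k := k) 𝒜 a ≤
      Submodule.span k ((fun β => (monomial β (1 : k) : MvPolynomial (Fin n) k)) ''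
        {b : Fin n →₀ ℕ | 𝒜 b = a}) := by
    intro f hf
    rw [f.as_sum]
    refine Submodule.sum_mem _ ?_
    intro β hβ
    have heq : (monomial β (f.coeff β) : MvPolynomial (Fin n) k)
        = f.coeff β • monomial β (1 : k) := by
      rw [MvPolynomial.smul_monomial, smul_eq_mul, mul_one]
    rw [heq]
    exact Submodule.smul_mem _ _ (Submodule.subset_span ⟨β, hf β hβ, rfl⟩)
  haveI : FiniteDimensional k
      ↥(Submodule.span k ((fun β => (monomial β (1 : k) : MvPolynomial (Fin n) k)) ''
        {b : Fin n →₀ ℕ | 𝒜 b = a})) :=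
    FiniteDimensional.span_of_finite k (hfib.image _)
  exact Submodule.finiteDimensional_of_le hle

lemma comap_subtype_finrank {A : Type*} (𝒜 : (Fin n →₀ ℕ) → A) (a : A)
    (J : Ideal (MvPolynomial (Fin n) k)) :
    Module.finrank k
      ↥(Submodule.comap (gradedPiece (k := k) 𝒜 a).subtype (Submodule.restrictScalars k J)) =
    Module.finrank k
      ↥(Submodule.restrictScalars k J ⊓ gradedPiece (k := k) 𝒜 a) := by
  have heq : Submodule.comap (gradedPiece (k := k) 𝒜 a).subtype (Submodule.restrictScalars k J)
      = Submodule.comap (gradedPiece (k := k) 𝒜 a).subtype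
          (Submodule.restrictScalars k J ⊓ gradedPiece (k := k) 𝒜 a) := by
    ext x
    simp only [Submodule.mem_comap, Submodule.mem_inf, Submodule.restrictScalars_mem]
    exact ⟨fun h => ⟨h, x.2⟩, fun h => h.1⟩
  rw [heq]
  exact LinearEquiv.finrank_eq (Submodule.comapSubtypeEquivOfLe inf_le_right)

end Aux4

/-- An `𝒜`-homogeneous ideal `I` and its initial ideal `in_≺(I)` have the same
`𝒜`-graded Hilbert function: `dim_k(R_a/I_a) = dim_k(R_a/(in_≺(I))_a)` for all `a`. -/
theorem hilbertFunction_initialIdeal {A : Type*} [AddCommMonoid A]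
    (𝒜 : (Fin n →₀ ℕ) → A) (hadd : ∀ x y, 𝒜 (x + y) = 𝒜 x + 𝒜 y)
    (hfib : ∀ a : A, {b : Fin n →₀ ℕ | 𝒜 b = a}.Finite)
    (I : Ideal (MvPolynomial (Fin n) k)) (hI : IsHomogeneousIdeal 𝒜 I)
    (τ : TermOrder n) (a : A) :
    Module.finrank k
      (↥(gradedPiece (k := k) 𝒜 a) ⧸
        Submodule.comap (gradedPiece (k := k) 𝒜 a).subtype
          (Submodule.restrictScalars k I)) =
    Module.finrank k
      (↥(gradedPiece (k := k) 𝒜 a) ⧸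
        Submodule.comap (gradedPiece (k := k) 𝒜 a).subtype
          (Submodule.restrictScalars k (τ.initialIdeal I))) := by
  classical
  haveI := gradedPiece_finiteDimensional (k := k) 𝒜 a (hfib a)
  have hfin1 : (leadSet τ (Submodule.restrictScalars k I ⊓ gradedPiece (k := k) 𝒜 a)).Finite := by
    apply (hfib a).subset
    rintro α ⟨f, ⟨_, hgp⟩, hne, rfl⟩
    exact hgp _ (τ.leadExp_mem hne)
  have hfin2 : (leadSet τ (Submodule.restrictScalars k (τ.initialIdeal I) ⊓
      gradedPiece (k := k) 𝒜 a)).Finite := by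
    apply (hfib a).subset
    rintro α ⟨f, ⟨_, hgp⟩, hne, rfl⟩
    exact hgp _ (τ.leadExp_mem hne)
  have hsets := leadSet_initialIdeal_eq hadd hI τ a
  have hcard : hfin1.toFinset.card = hfin2.toFinset.card := by
    have : hfin1.toFinset = hfin2.toFinset := by
      ext β
      rw [Set.Finite.mem_toFinset, Set.Finite.mem_toFinset, hsets]
    rw [this]
  have hr1 := finrank_eq_card_leadSet τ (hfib a)
    (Submodule.restrictScalars k I ⊓ gradedPiece (k := k) 𝒜 a) inf_le_right hfin1
  have hr2 := finrank_eq_card_leadSet τ (hfib a)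
    (Submodule.restrictScalars k (τ.initialIdeal I) ⊓ gradedPiece (k := k) 𝒜 a)
    inf_le_right hfin2
  have hq1 := Submodule.finrank_quotient_add_finrank
    (Submodule.comap (gradedPiece (k := k) 𝒜 a).subtype (Submodule.restrictScalars k I))
  have hq2 := Submodule.finrank_quotient_add_finrank
    (Submodule.comap (gradedPiece (k := k) 𝒜 a).subtype
      (Submodule.restrictScalars k (τ.initialIdeal I)))
  rw [comap_subtype_finrank] at hq1 hq2
  omega
end
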